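/- arXiv:2209.00735 — 5 statements merged into one kernel-verified Lean document; each statement's English description precedes it below -/
import Mathlib

section
/- Let d_in, d_out ≥ 1 be integers, let X ⊂ ℝ^{d_in}, Y ⊂ ℝ^{d_out}, and G ⊂ ℝ be finite sets, let f : X → Y, and let g : X × {1,…,d_out} × {1,…,d_in} → G. Then there exist affine layers W1 : ℝ^{d_in} → ℝ^{d1}, W2 : ℝ^{d1} → ℝ^{d2}, W3 : ℝ^{d2} → ℝ^{d_out} with d1 = 10·d_in·|X| and d2 = 6·d_in·d_out·|X|, such that the network f_net := W3 ∘ σ ∘ W2 ∘ σ ∘ W1 satisfies: (1) f_net(x) = f(x) for every x ∈ X; and (2) f_net is differentiable at every x ∈ X, with ∂(f_net)_i/∂x_j (x) = g(x, i, j) for all x ∈ X, i ∈ {1,…,d_out}, j ∈ {1,…,d_in}. -/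
/-- The ReLU function applied entrywise to a vector. -/
noncomputable def relu {n : ℕ} (v : Fin n → ℝ) : Fin n → ℝ := fun i => max (v i) 0

namespace St0

lemma relumax (t : ℝ) : max t 0 - max (-t) 0 = t := by
  rcases le_total t 0 with h | h
  · rw [max_eq_right h, max_eq_left (by linarith)]; ring
  · rw [max_eq_left h, max_eq_right (by linarith)]; ring

abbrev I1 (din n : ℕ) := (Fin 10 × Fin din) × Fin n
abbrev I2 (din dout n : ℕ) := ((Fin 6 × Fin din) × Fin dout) × Fin n

noncomputable def e1 (din n : ℕ) : I1 din n ≃ Fin (10 * din * n) :=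
  (finProdFinEquiv.prodCongr (Equiv.refl (Fin n))).trans finProdFinEquiv

noncomputable def e2 (din dout n : ℕ) : I2 din dout n ≃ Fin (6 * din * dout * n) :=
  (((finProdFinEquiv.prodCongr (Equiv.refl (Fin dout))).trans finProdFinEquiv).prodCongr
    (Equiv.refl (Fin n))).trans finProdFinEquiv

variable (din dout n : ℕ)

noncomputable def mat1 : Matrix (Fin (10 * din * n)) (Fin din) ℝ := fun a j' =>
  if ((e1 din n).symm a).1.2 = j' then
    (if ((e1 din n).symm a).1.1 = 0 ∨ ((e1 din n).symm a).1.1 = 2 then 1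
     else if ((e1 din n).symm a).1.1 = 1 ∨ ((e1 din n).symm a).1.1 = 3 then -1 else 0)
  else 0

noncomputable def vb1 (pt : Fin n → Fin din → ℝ) (ε : ℝ) : Fin (10 * din * n) → ℝ := fun a =>
  if ((e1 din n).symm a).1.1 = 2 then -pt ((e1 din n).symm a).2 ((e1 din n).symm a).1.2 - ε
  else if ((e1 din n).symm a).1.1 = 3 then pt ((e1 din n).symm a).2 ((e1 din n).symm a).1.2 - ε
  else 0

noncomputable def pre1 (pt : Fin n → Fin din → ℝ) (ε : ℝ) (x : Fin din → ℝ) : I1 din n → ℝ := fun p =>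
  if p.1.1 = 0 then x p.1.2
  else if p.1.1 = 1 then -x p.1.2
  else if p.1.1 = 2 then x p.1.2 - pt p.2 p.1.2 - ε
  else if p.1.1 = 3 then pt p.2 p.1.2 - x p.1.2 - ε
  else 0

lemma layer1 (pt : Fin n → Fin din → ℝ) (ε : ℝ) (x : Fin din → ℝ) (p : I1 din n) :
    ((mat1 din n).mulVec x + vb1 din n pt ε) ((e1 din n) p) = pre1 din n pt ε x p := by
  obtain ⟨⟨s, j⟩, k⟩ := p
  simp only [Pi.add_apply, Matrix.mulVec, dotProduct, mat1, vb1, pre1,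
    Equiv.symm_apply_apply, ite_mul, zero_mul, Finset.sum_ite_eq, Finset.mem_univ, if_true]
  fin_cases s <;> simp (config := { decide := true }) <;> ring

noncomputable def Af (pt : Fin n → Fin din → ℝ) (fv : Fin n → Fin dout → ℝ)
    (gv : Fin n → Fin dout → Fin din → ℝ) (x : Fin din → ℝ) (k : Fin n) (i : Fin dout) : ℝ :=
  fv k i + ∑ j, gv k i j * (x j - pt k j)

noncomputable def Df (pt : Fin n → Fin din → ℝ) (ε : ℝ) (x : Fin din → ℝ) (k : Fin n) : ℝ :=
  ∑ j, (max (x j - pt k j - ε) 0 + max (pt k j - x j - ε) 0)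

noncomputable def row2 (ε C : ℝ) (gv : Fin n → Fin dout → Fin din → ℝ) :
    I2 din dout n → I1 din n → ℝ := fun q p =>
  if p.2 = q.2 then
    (if q.1.1.1 = 0 then
      (if p.1.1 = 0 then gv q.2 q.1.2 p.1.2
       else if p.1.1 = 1 then -gv q.2 q.1.2 p.1.2
       else if p.1.1 = 2 then -(C/ε) else if p.1.1 = 3 then -(C/ε) else 0)
     else if q.1.1.1 = 1 then
      (if p.1.1 = 0 then -gv q.2 q.1.2 p.1.2
       else if p.1.1 = 1 then gv q.2 q.1.2 p.1.2
       else if p.1.1 = 2 then -(C/ε) else if p.1.1 = 3 then -(C/ε) else 0)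
     else 0)
  else 0

noncomputable def mat2 (ε C : ℝ) (gv : Fin n → Fin dout → Fin din → ℝ) :
    Matrix (Fin (6 * din * dout * n)) (Fin (10 * din * n)) ℝ := fun b a =>
  row2 din dout n ε C gv ((e2 din dout n).symm b) ((e1 din n).symm a)

noncomputable def vb2 (pt : Fin n → Fin din → ℝ) (fv : Fin n → Fin dout → ℝ)
    (gv : Fin n → Fin dout → Fin din → ℝ) : Fin (6 * din * dout * n) → ℝ := fun b =>
  let q := (e2 din dout n).symm b
  if q.1.1.1 = 0 then fv q.2 q.1.2 - ∑ j, gv q.2 q.1.2 j * pt q.2 j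
  else if q.1.1.1 = 1 then -(fv q.2 q.1.2 - ∑ j, gv q.2 q.1.2 j * pt q.2 j)
  else 0

noncomputable def pre2 (pt : Fin n → Fin din → ℝ) (ε C : ℝ) (fv : Fin n → Fin dout → ℝ)
    (gv : Fin n → Fin dout → Fin din → ℝ) (x : Fin din → ℝ) : I2 din dout n → ℝ := fun q =>
  if q.1.1.1 = 0 then Af din dout n pt fv gv x q.2 q.1.2 - (C/ε) * Df din n pt ε x q.2
  else if q.1.1.1 = 1 then -Af din dout n pt fv gv x q.2 q.1.2 - (C/ε) * Df din n pt ε x q.2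
  else 0

lemma layer2 (pt : Fin n → Fin din → ℝ) (ε C : ℝ) (fv : Fin n → Fin dout → ℝ)
    (gv : Fin n → Fin dout → Fin din → ℝ) (x : Fin din → ℝ) (q : I2 din dout n) :
    ((mat2 din dout n ε C gv).mulVec (relu ((mat1 din n).mulVec x + vb1 din n pt ε))
        + vb2 din dout n pt fv gv) ((e2 din dout n) q)
      = pre2 din dout n pt ε C fv gv x q := by
  obtain ⟨⟨⟨s, j0⟩, i⟩, k⟩ := q
  have hvp : ∀ p : I1 din n, relu ((mat1 din n).mulVec x + vb1 din n pt ε) ((e1 din n) p)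
      = max (pre1 din n pt ε x p) 0 := by
    intro p; simp only [relu, layer1]
  have h1 : (mat2 din dout n ε C gv).mulVec (relu ((mat1 din n).mulVec x + vb1 din n pt ε))
      ((e2 din dout n) (((s,j0),i),k))
      = ∑ p : I1 din n, row2 din dout n ε C gv (((s,j0),i),k) p * max (pre1 din n pt ε x p) 0 := by
    rw [Matrix.mulVec, dotProduct]
    rw [← Equiv.sum_comp (e1 din n)
      (fun a => mat2 din dout n ε C gv ((e2 din dout n) (((s,j0),i),k)) a
        * relu ((mat1 din n).mulVec x + vb1 din n pt ε) a)]
    refine Finset.sum_congr rfl fun p _ => ?_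
    rw [hvp]
    simp [mat2, Equiv.symm_apply_apply]
  rw [Pi.add_apply, h1]
  have hcol : ∀ c : Fin 10 × Fin din,
      (∑ k' : Fin n, row2 din dout n ε C gv (((s,j0),i),k) (c, k')
        * max (pre1 din n pt ε x (c, k')) 0)
      = row2 din dout n ε C gv (((s,j0),i),k) (c, k) * max (pre1 din n pt ε x (c, k)) 0 := by
    intro c
    rw [Finset.sum_eq_single k]
    · intro k' _ hk'
      simp [row2, hk']
    · intro h; exact absurd (Finset.mem_univ k) h
  rw [Fintype.sum_prod_type]
  simp only [hcol]
  rw [Fintype.sum_prod_type]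
  have hid : ∀ (co : Fin din → ℝ),
      (∑ j, co j * max (x j) 0) - (∑ j, co j * max (-x j) 0) = ∑ j, co j * x j := by
    intro co
    rw [← Finset.sum_sub_distrib]
    exact Finset.sum_congr rfl fun j _ => by linear_combination co j * relumax (x j)
  fin_cases s <;>
  · simp only [vb2, row2, pre1, pre2, Af, Df, Equiv.symm_apply_apply]
    simp (config := { decide := true }) only [Fin.sum_univ_succ, if_true, if_false,
      zero_mul, Finset.sum_const_zero, add_zero, zero_add, neg_mul, Finset.sum_neg_distrib,
      mul_sub, Finset.sum_sub_distrib, Finset.mul_sum, mul_add, Finset.sum_add_distrib]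
    try linear_combination hid (fun j => gv k i j)
    try linear_combination (-1 : ℝ) * hid (fun j => gv k i j)
    try ring

noncomputable def mat3 : Matrix (Fin dout) (Fin (6 * din * dout * n)) ℝ := fun i b =>
  let q := (e2 din dout n).symm b
  if q.1.2 = i then (if q.1.1.1 = 0 then 1/(din:ℝ) else if q.1.1.1 = 1 then -(1/(din:ℝ)) else 0)
  else 0

set_option maxHeartbeats 1000000 in
lemma netFormula (hdin : 1 ≤ din) (pt : Fin n → Fin din → ℝ) (ε C : ℝ)
    (fv : Fin n → Fin dout → ℝ) (gv : Fin n → Fin dout → Fin din → ℝ)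
    (x : Fin din → ℝ) (i : Fin dout) :
    ((mat3 din dout n).mulVec (relu ((mat2 din dout n ε C gv).mulVec
        (relu ((mat1 din n).mulVec x + vb1 din n pt ε)) + vb2 din dout n pt fv gv))
      + (0 : Fin dout → ℝ)) i
    = ∑ k, (max (Af din dout n pt fv gv x k i - (C/ε) * Df din n pt ε x k) 0
        - max (-Af din dout n pt fv gv x k i - (C/ε) * Df din n pt ε x k) 0) := by
  have hw : ∀ q : I2 din dout n,
      relu ((mat2 din dout n ε C gv).mulVec (relu ((mat1 din n).mulVec x + vb1 din n pt ε))
        + vb2 din dout n pt fv gv) ((e2 din dout n) q)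
      = max (pre2 din dout n pt ε C fv gv x q) 0 := by
    intro q; simp only [relu, layer2]
  rw [Pi.add_apply, Pi.zero_apply, add_zero, Matrix.mulVec, dotProduct]
  rw [← Equiv.sum_comp (e2 din dout n)
    (fun b => mat3 din dout n i b * relu ((mat2 din dout n ε C gv).mulVec
      (relu ((mat1 din n).mulVec x + vb1 din n pt ε)) + vb2 din dout n pt fv gv) b)]
  have : ∀ q : I2 din dout n,
      mat3 din dout n i ((e2 din dout n) q) * relu ((mat2 din dout n ε C gv).mulVec
        (relu ((mat1 din n).mulVec x + vb1 din n pt ε)) + vb2 din dout n pt fv gv)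
        ((e2 din dout n) q)
      = (if q.1.2 = i then (if q.1.1.1 = 0 then 1/(din:ℝ)
          else if q.1.1.1 = 1 then -(1/(din:ℝ)) else 0) else 0)
        * max (pre2 din dout n pt ε C fv gv x q) 0 := by
    intro q; rw [hw]; simp [mat3, Equiv.symm_apply_apply]
  simp only [this]
  rw [Fintype.sum_prod_type]
  rw [Fintype.sum_prod_type]
  have hcoli : ∀ c : Fin 6 × Fin din,
      (∑ i' : Fin dout, ∑ k : Fin n,
        (if i' = i then (if c.1 = 0 then 1/(din:ℝ) else if c.1 = 1 then -(1/(din:ℝ)) else 0) else 0)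
          * max (pre2 din dout n pt ε C fv gv x ((c, i'), k)) 0)
      = ∑ k : Fin n,
        (if c.1 = 0 then 1/(din:ℝ) else if c.1 = 1 then -(1/(din:ℝ)) else 0)
          * max (pre2 din dout n pt ε C fv gv x ((c, i), k)) 0 := by
    intro c
    rw [Finset.sum_eq_single i (fun i' _ hi' => by simp [hi'])
      (fun h => absurd (Finset.mem_univ i) h)]
    simp
  simp only [hcoli]
  rw [Fintype.sum_prod_type]
  have hdin0 : (din : ℝ) ≠ 0 := Nat.cast_ne_zero.mpr (by omega)
  simp (config := { decide := true }) only [pre2, Fin.sum_univ_succ, if_true, if_false,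
    zero_mul, Finset.sum_const_zero, add_zero, zero_add, Fin.sum_univ_zero]
  simp only [← Finset.mul_sum, Finset.sum_const, Finset.card_univ, Fintype.card_fin,
    nsmul_eq_mul, Finset.sum_sub_distrib]
  field_simp
  ring

lemma sep (din n : ℕ) (pt : Fin n → Fin din → ℝ) (hpt : Function.Injective pt) :
    ∃ ε : ℝ, 0 < ε ∧ ∀ k l : Fin n, k ≠ l → ∃ j, 3*ε ≤ |pt k j - pt l j| := by
  by_cases h : (Finset.univ.offDiag (α := Fin n)).Nonempty
  · set T := Finset.univ.offDiag.image (fun p : Fin n × Fin n => dist (pt p.1) (pt p.2)) with hT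
    have hTne : T.Nonempty := h.image _
    set m := T.min' hTne with hm
    have hmpos : 0 < m := by
      rw [hm, Finset.lt_min'_iff]
      intro b hb
      rw [hT, Finset.mem_image] at hb
      obtain ⟨p, hp, rfl⟩ := hb
      rw [Finset.mem_offDiag] at hp
      exact dist_pos.mpr (fun he => hp.2.2 (hpt he))
    refine ⟨m/3, by positivity, fun k l hkl => ?_⟩
    have hmle : m ≤ dist (pt k) (pt l) := by
      apply Finset.min'_le
      rw [hT, Finset.mem_image]
      exact ⟨(k, l), Finset.mem_offDiag.mpr ⟨Finset.mem_univ _, Finset.mem_univ _, hkl⟩, rfl⟩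
    by_contra hc
    push_neg at hc
    have : dist (pt k) (pt l) < m := by
      rw [dist_pi_lt_iff hmpos]
      intro j
      rw [Real.dist_eq]
      have := hc j
      linarith
    linarith
  · refine ⟨1, one_pos, fun k l hkl => absurd
      (Finset.mem_offDiag.mpr ⟨Finset.mem_univ k, Finset.mem_univ l, hkl⟩ :
        (k, l) ∈ Finset.univ.offDiag)
      (fun hm => h ⟨_, hm⟩)⟩

theorem auxnet (din dout n : ℕ) (hdin : 1 ≤ din) (pt : Fin n → Fin din → ℝ)
    (hpt : Function.Injective pt) (fv : Fin n → Fin dout → ℝ)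
    (gv : Fin n → Fin dout → Fin din → ℝ) :
    ∃ (M1 : Matrix (Fin (10 * din * n)) (Fin din) ℝ) (b1 : Fin (10 * din * n) → ℝ)
      (M2 : Matrix (Fin (6 * din * dout * n)) (Fin (10 * din * n)) ℝ)
      (b2 : Fin (6 * din * dout * n) → ℝ)
      (M3 : Matrix (Fin dout) (Fin (6 * din * dout * n)) ℝ) (b3 : Fin dout → ℝ),
      ∀ F : (Fin din → ℝ) → (Fin dout → ℝ),
        F = (fun x => M3.mulVec (relu (M2.mulVec (relu (M1.mulVec x + b1)) + b2)) + b3) →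
        ∀ l : Fin n, F (pt l) = fv l ∧ DifferentiableAt ℝ F (pt l) ∧
          ∀ i j, fderiv ℝ F (pt l) (Pi.single j 1) i = gv l i j := by
  obtain ⟨ε, hε, hsep⟩ := sep din n pt hpt
  set R : ℝ := ∑ l, ∑ j, |pt l j| with hR
  have hR0 : 0 ≤ R := Finset.sum_nonneg fun _ _ => Finset.sum_nonneg fun _ _ => abs_nonneg _
  have habs : ∀ l j, |pt l j| ≤ R := by
    intro l j
    calc |pt l j| ≤ ∑ j', |pt l j'| :=
          Finset.single_le_sum (f := fun j' => |pt l j'|)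
            (fun _ _ => abs_nonneg _) (Finset.mem_univ j)
      _ ≤ R := Finset.single_le_sum (f := fun l => ∑ j', |pt l j'|)
          (fun _ _ => Finset.sum_nonneg fun _ _ => abs_nonneg _) (Finset.mem_univ l)
  have htn : ∀ (k : Fin n) (j : Fin din), (0:ℝ) ≤ R + ε + |pt k j| := by
    intro k j; have := abs_nonneg (pt k j); linarith
  set C : ℝ := 1 + ∑ k, ∑ i, (|fv k i| + ∑ j, |gv k i j| * (R + ε + |pt k j|)) with hCdef
  have hterm : ∀ (k : Fin n) (i : Fin dout),
      0 ≤ |fv k i| + ∑ j, |gv k i j| * (R + ε + |pt k j|) := by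
    intro k i
    exact add_nonneg (abs_nonneg _)
      (Finset.sum_nonneg fun j _ => mul_nonneg (abs_nonneg _) (htn k j))
  have hC1 : 1 ≤ C := by
    rw [hCdef]
    have : 0 ≤ ∑ k, ∑ i, (|fv k i| + ∑ j, |gv k i j| * (R + ε + |pt k j|)) :=
      Finset.sum_nonneg fun k _ => Finset.sum_nonneg fun i _ => hterm k i
    linarith
  have hCbound : ∀ (l k : Fin n) (i : Fin dout) (x : Fin din → ℝ),
      (∀ j, |x j - pt l j| < ε) → |Af din dout n pt fv gv x k i| ≤ C - 1 := by
    intro l k i x hx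
    have step1 : |Af din dout n pt fv gv x k i|
        ≤ |fv k i| + ∑ j, |gv k i j| * (R + ε + |pt k j|) := by
      rw [Af]
      calc |fv k i + ∑ j, gv k i j * (x j - pt k j)|
          ≤ |fv k i| + |∑ j, gv k i j * (x j - pt k j)| := abs_add_le _ _
        _ ≤ |fv k i| + ∑ j, |gv k i j * (x j - pt k j)| := by
            have := Finset.abs_sum_le_sum_abs (fun j => gv k i j * (x j - pt k j)) Finset.univ
            linarith
        _ ≤ |fv k i| + ∑ j, |gv k i j| * (R + ε + |pt k j|) := by
            have : ∀ j ∈ Finset.univ, |gv k i j * (x j - pt k j)|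
                ≤ |gv k i j| * (R + ε + |pt k j|) := by
              intro j _
              rw [abs_mul]
              apply mul_le_mul_of_nonneg_left _ (abs_nonneg _)
              have h1 : |x j - pt k j| ≤ |x j - pt l j| + |pt l j - pt k j| := abs_sub_le _ _ _
              have h2 : |pt l j - pt k j| ≤ |pt l j| + |pt k j| := abs_sub _ _
              have h3 := habs l j
              have h4 := (hx j).le
              linarith
            have := Finset.sum_le_sum this
            linarith
    have step2 : |fv k i| + ∑ j, |gv k i j| * (R + ε + |pt k j|) ≤ C - 1 := by
      rw [hCdef]
      have h1 : (|fv k i| + ∑ j, |gv k i j| * (R + ε + |pt k j|))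
          ≤ ∑ i', (|fv k i'| + ∑ j, |gv k i' j| * (R + ε + |pt k j|)) :=
        Finset.single_le_sum (fun i' _ => hterm k i') (Finset.mem_univ i)
      have h2 : (∑ i', (|fv k i'| + ∑ j, |gv k i' j| * (R + ε + |pt k j|)))
          ≤ ∑ k', ∑ i', (|fv k' i'| + ∑ j, |gv k' i' j| * (R + ε + |pt k' j|)) :=
        Finset.single_le_sum
          (f := fun k' => ∑ i', (|fv k' i'| + ∑ j, |gv k' i' j| * (R + ε + |pt k' j|)))
          (fun k' _ => Finset.sum_nonneg fun i' _ => hterm k' i') (Finset.mem_univ k)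
      linarith
    linarith
  refine ⟨mat1 din n, vb1 din n pt ε, mat2 din dout n ε C gv, vb2 din dout n pt fv gv,
    mat3 din dout n, 0, ?_⟩
  intro F hF l
  have hglob : ∀ x i, F x i = ∑ k, (max (Af din dout n pt fv gv x k i
      - (C/ε) * Df din n pt ε x k) 0
      - max (-Af din dout n pt fv gv x k i - (C/ε) * Df din n pt ε x k) 0) := by
    intro x i
    rw [hF]
    exact netFormula din dout n hdin pt ε C fv gv x i
  set c0 : Fin dout → ℝ := fun i => fv l i - ∑ j, gv l i j * pt l j with hc0
  set L : (Fin din → ℝ) →L[ℝ] (Fin dout → ℝ) :=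
    LinearMap.toContinuousLinearMap (Matrix.mulVecLin (gv l)) with hL
  set Aff : (Fin din → ℝ) → (Fin dout → ℝ) := fun x => c0 + L x with hAffdef
  have hAffval : ∀ x i, Aff x i = c0 i + ∑ j, gv l i j * x j := by
    intro x i
    rw [hAffdef]
    simp [hL, Matrix.mulVecLin_apply, Matrix.mulVec, dotProduct]
    erw [Matrix.mulVecLin_apply]
    simp [Matrix.mulVec, dotProduct]
  have hAf : ∀ x i, Af din dout n pt fv gv x l i = Aff x i := by
    intro x i
    rw [hAffval, Af, hc0]
    simp only [mul_sub, Finset.sum_sub_distrib]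
    ring
  have hloc : ∀ x, (∀ j, |x j - pt l j| < ε) → F x = Aff x := by
    intro x hx
    funext i
    rw [hglob x i]
    rw [Finset.sum_eq_single l ?_ (fun h => absurd (Finset.mem_univ l) h)]
    · have hD0 : Df din n pt ε x l = 0 := by
        rw [Df]
        apply Finset.sum_eq_zero
        intro j _
        obtain ⟨h1, h2⟩ := abs_lt.mp (hx j)
        rw [max_eq_right (by linarith), max_eq_right (by linarith)]
        ring
      rw [hD0, mul_zero, sub_zero, sub_zero, relumax]
      exact hAf x i
    · intro k _ hk
      have hD : ε ≤ Df din n pt ε x k := by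
        obtain ⟨j, hj⟩ := hsep k l hk
        have htri : |pt k j - pt l j| ≤ |pt k j - x j| + |x j - pt l j| := abs_sub_le _ _ _
        have hxj := hx j
        have h2e : 2*ε ≤ |pt k j - x j| := by linarith
        have hjterm : ε ≤ max (x j - pt k j - ε) 0 + max (pt k j - x j - ε) 0 := by
          rcases abs_cases (pt k j - x j) with ⟨he, _⟩ | ⟨he, _⟩
          · have : ε ≤ pt k j - x j - ε := by linarith
            have h4 := le_max_left (pt k j - x j - ε) (0:ℝ)
            have h5 := le_max_right (x j - pt k j - ε) (0:ℝ)
            linarith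
          · have : ε ≤ x j - pt k j - ε := by linarith
            have h4 := le_max_left (x j - pt k j - ε) (0:ℝ)
            have h5 := le_max_right (pt k j - x j - ε) (0:ℝ)
            linarith
        rw [Df]
        calc ε ≤ max (x j - pt k j - ε) 0 + max (pt k j - x j - ε) 0 := hjterm
          _ ≤ ∑ j', (max (x j' - pt k j' - ε) 0 + max (pt k j' - x j' - ε) 0) :=
            Finset.single_le_sum
              (f := fun j' => max (x j' - pt k j' - ε) 0 + max (pt k j' - x j' - ε) 0)
              (fun j' _ => add_nonneg (le_max_right _ _) (le_max_right _ _))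
              (Finset.mem_univ j)
      have hCb := hCbound l k i x hx
      have hCD : C ≤ (C/ε) * Df din n pt ε x k := by
        have h0 : 0 ≤ C / ε := div_nonneg (by linarith) hε.le
        calc C = (C/ε) * ε := by field_simp
          _ ≤ (C/ε) * Df din n pt ε x k := mul_le_mul_of_nonneg_left hD h0
      have hub := le_abs_self (Af din dout n pt fv gv x k i)
      have hlb := neg_abs_le (Af din dout n pt fv gv x k i)
      rw [max_eq_right (by linarith), max_eq_right (by linarith)]
      ring
  have hball : ∀ᶠ x in nhds (pt l), F x = Aff x := by
    filter_upwards [Metric.ball_mem_nhds (pt l) hε] with x hx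
    apply hloc
    intro j
    rw [Metric.mem_ball] at hx
    have := (dist_pi_lt_iff hε).mp hx j
    rwa [Real.dist_eq] at this
  have hEv : F =ᶠ[nhds (pt l)] Aff := hball
  have hAffD : HasFDerivAt Aff L (pt l) := by
    rw [hAffdef]
    exact (L.hasFDerivAt (x := pt l)).const_add c0
  have hFval : F (pt l) = fv l := by
    rw [hloc (pt l) (fun j => by simpa using hε)]
    funext i
    rw [hAffval, hc0]
    ring
  have hdiff : DifferentiableAt ℝ F (pt l) :=
    hEv.differentiableAt_iff.mpr hAffD.differentiableAt
  refine ⟨hFval, hdiff, ?_⟩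
  intro i j
  rw [hEv.fderiv_eq, hAffD.fderiv]
  rw [hL]
  simp [Matrix.mulVecLin_apply, Matrix.mulVec, dotProduct, Pi.single_apply,
    mul_ite, mul_one, mul_zero, Finset.sum_ite_eq']
  erw [Matrix.mulVecLin_apply]
  simp [Matrix.mulVec, dotProduct, Pi.single_apply]

end St0

/-- function approximation with custom gradients, Lemma 5 of the paper:
for finite `X ⊂ ℝ^{d_in}`, `Y ⊂ ℝ^{d_out}`, `G ⊂ ℝ`, any `f : X → Y` and desired Jacobian
`g : X × [d_out] × [d_in] → G` there is a 3-layer ReLU network with hidden dimensions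
`d₁ = 10·d_in·|X|` and `d₂ = 6·d_in·d_out·|X|` matching `f` and with the prescribed
partial derivatives at every point of `X`. -/
theorem statement0 (din dout : ℕ) (hdin : 1 ≤ din) (hdout : 1 ≤ dout)
    (X : Finset (Fin din → ℝ)) (Y : Finset (Fin dout → ℝ)) (G : Finset ℝ)
    (f : (Fin din → ℝ) → (Fin dout → ℝ)) (hf : ∀ x ∈ X, f x ∈ Y)
    (g : (Fin din → ℝ) → Fin dout → Fin din → ℝ)
    (hg : ∀ x ∈ X, ∀ (i : Fin dout) (j : Fin din), g x i j ∈ G) :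
    ∃ (M1 : Matrix (Fin (10 * din * X.card)) (Fin din) ℝ)
      (b1 : Fin (10 * din * X.card) → ℝ)
      (M2 : Matrix (Fin (6 * din * dout * X.card)) (Fin (10 * din * X.card)) ℝ)
      (b2 : Fin (6 * din * dout * X.card) → ℝ)
      (M3 : Matrix (Fin dout) (Fin (6 * din * dout * X.card)) ℝ)
      (b3 : Fin dout → ℝ),
      ∀ fnet : (Fin din → ℝ) → (Fin dout → ℝ),
        fnet = (fun x =>
          M3.mulVec (relu (M2.mulVec (relu (M1.mulVec x + b1)) + b2)) + b3) →
        (∀ x ∈ X, fnet x = f x) ∧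
        (∀ x ∈ X, DifferentiableAt ℝ fnet x ∧
          ∀ (i : Fin dout) (j : Fin din),
            fderiv ℝ fnet x (Pi.single j 1) i = g x i j) := by
  classical
  set pt : Fin X.card → (Fin din → ℝ) := fun k => ((X.equivFin.symm k : X) : Fin din → ℝ)
    with hpt
  have hptinj : Function.Injective pt :=
    Subtype.coe_injective.comp X.equivFin.symm.injective
  obtain ⟨M1, b1, M2, b2, M3, b3, hspec⟩ :=
    St0.auxnet din dout X.card hdin pt hptinj (fun k => f (pt k)) (fun k => g (pt k))
  refine ⟨M1, b1, M2, b2, M3, b3, ?_⟩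
  intro fnet hfnet
  have key : ∀ x ∈ X, fnet x = f x ∧ DifferentiableAt ℝ fnet x ∧
      ∀ (i : Fin dout) (j : Fin din), fderiv ℝ fnet x (Pi.single j 1) i = g x i j := by
    intro x hx
    have hx' : x = pt (X.equivFin ⟨x, hx⟩) := by simp [hpt]
    obtain ⟨h1, h2, h3⟩ := hspec fnet hfnet (X.equivFin ⟨x, hx⟩)
    rw [hx']
    exact ⟨h1, h2, h3⟩
  exact ⟨fun x hx => (key x hx).1, fun x hx => ⟨(key x hx).2.1, (key x hx).2.2⟩⟩
end

section
/- Let S ⊂ ℝ be a finite set with at least one element, let 0 < Δ ≤ (1/10)·min(1, min_{x ≠ x' ∈ S} |x − x'|), let x₀ ∈ S, and let γ ∈ {0, 1}. Then there exists a function ψ : ℝ → ℝ of the form ψ = W' ∘ σ ∘ W, where W : ℝ → ℝ⁵ and W' : ℝ⁵ → ℝ are affine, such that: (1) ψ(x) = 0 for all x ≤ x₀ − 2Δ and for all x ≥ x₀ + 2Δ; (2) ψ(x₀) = 1 and ψ is differentiable with derivative identically γ on (x₀ − Δ, x₀ + Δ); (3) ψ is affine on [x₀ − 2Δ, x₀ −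 Δ] and on [x₀ + Δ, x₀ + 2Δ]. Consequently, for every x ∈ S one has ψ(x) = 1 if x = x₀ and ψ(x) = 0 otherwise, and ψ is differentiable at every x ∈ S with ψ'(x) = γ if x = x₀ and ψ'(x) = 0 otherwise. -/
/-- univariate bump indicator built from 5 ReLU units:
for a finite `S ⊂ ℝ`, gap parameter `Δ ≤ (1/10)·min(1, min-gap of S)`, `x₀ ∈ S` and a
gradient bit `γ ∈ {0,1}`, there is `ψ = W' ∘ σ ∘ W` with `W : ℝ → ℝ⁵`, `W' : ℝ⁵ → ℝ`
affine, vanishing outside `(x₀ - 2Δ, x₀ + 2Δ)`, equal to `1` at `x₀` with derivative `γ`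
on `(x₀ - Δ, x₀ + Δ)`, affine on the two transition intervals; consequently `ψ` is the
indicator of `x₀` on `S`, with derivative `γ·1[x = x₀]` at every `x ∈ S`. -/
theorem statement1 (S : Finset ℝ) (hS : S.Nonempty)
    (Δ : ℝ) (hΔ0 : 0 < Δ) (hΔ1 : Δ ≤ 1 / 10)
    (hΔgap : ∀ x ∈ S, ∀ x' ∈ S, x ≠ x' → Δ ≤ |x - x'| / 10)
    (x₀ : ℝ) (hx₀ : x₀ ∈ S) (γ : ℝ) (hγ : γ = 0 ∨ γ = 1) :
    ∃ (M b : Fin 5 → ℝ) (M' : Fin 5 → ℝ) (c' : ℝ),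
      ∀ ψ : ℝ → ℝ,
        ψ = (fun x => (∑ i, M' i * max (M i * x + b i) 0) + c') →
        ((∀ x : ℝ, x ≤ x₀ - 2 * Δ → ψ x = 0) ∧
         (∀ x : ℝ, x₀ + 2 * Δ ≤ x → ψ x = 0) ∧
         ψ x₀ = 1 ∧
         (∀ x ∈ Set.Ioo (x₀ - Δ) (x₀ + Δ), HasDerivAt ψ γ x) ∧
         (∃ a c : ℝ, ∀ x ∈ Set.Icc (x₀ - 2 * Δ) (x₀ - Δ), ψ x = a * x + c) ∧
         (∃ a c : ℝ, ∀ x ∈ Set.Icc (x₀ + Δ) (x₀ + 2 * Δ), ψ x = a * x + c) ∧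
         (∀ x ∈ S, ψ x = if x = x₀ then 1 else 0) ∧
         (∀ x ∈ S, HasDerivAt ψ (if x = x₀ then γ else 0) x)) := by
  have hΔne : Δ ≠ 0 := ne_of_gt hΔ0
  refine ⟨![1, 1, 1, 1, 0],
    ![-(x₀ - 2*Δ), -(x₀ - Δ), -(x₀ + Δ), -(x₀ + 2*Δ), 0],
    ![1/Δ - γ, -(1/Δ) + 2*γ, -(1/Δ) - 2*γ, 1/Δ + γ, 0], 0, ?_⟩
  intro ψ hψ
  have hψx : ∀ x : ℝ, ψ x = (1/Δ - γ) * max (x - (x₀ - 2*Δ)) 0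
      + (-(1/Δ) + 2*γ) * max (x - (x₀ - Δ)) 0
      + (-(1/Δ) - 2*γ) * max (x - (x₀ + Δ)) 0
      + (1/Δ + γ) * max (x - (x₀ + 2*Δ)) 0 := by
    intro x
    rw [hψ]
    simp [Fin.sum_univ_five, sub_eq_add_neg]
  -- value lemmas
  have hL : ∀ x : ℝ, x ≤ x₀ - 2 * Δ → ψ x = 0 := by
    intro x hx
    rw [hψx, max_eq_right (by linarith : x - (x₀ - 2*Δ) ≤ 0),
      max_eq_right (by linarith : x - (x₀ - Δ) ≤ 0),
      max_eq_right (by linarith : x - (x₀ + Δ) ≤ 0),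
      max_eq_right (by linarith : x - (x₀ + 2*Δ) ≤ 0)]
    ring
  have hR : ∀ x : ℝ, x₀ + 2 * Δ ≤ x → ψ x = 0 := by
    intro x hx
    rw [hψx, max_eq_left (by linarith : (0:ℝ) ≤ x - (x₀ - 2*Δ)),
      max_eq_left (by linarith : (0:ℝ) ≤ x - (x₀ - Δ)),
      max_eq_left (by linarith : (0:ℝ) ≤ x - (x₀ + Δ)),
      max_eq_left (by linarith : (0:ℝ) ≤ x - (x₀ + 2*Δ))]
    field_simp
    ring
  have hmid : ∀ x : ℝ, x₀ - Δ ≤ x → x ≤ x₀ + Δ → ψ x = γ * (x - x₀) + 1 := by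
    intro x h1 h2
    rw [hψx, max_eq_left (by linarith : (0:ℝ) ≤ x - (x₀ - 2*Δ)),
      max_eq_left (by linarith : (0:ℝ) ≤ x - (x₀ - Δ)),
      max_eq_right (by linarith : x - (x₀ + Δ) ≤ 0),
      max_eq_right (by linarith : x - (x₀ + 2*Δ) ≤ 0)]
    field_simp
    ring
  have hx₀val : ψ x₀ = 1 := by
    rw [hmid x₀ (by linarith) (by linarith)]; ring
  have hder : ∀ x ∈ Set.Ioo (x₀ - Δ) (x₀ + Δ), HasDerivAt ψ γ x := by
    intro x hx
    have h1 : HasDerivAt (fun y : ℝ => γ * (y - x₀) + 1) γ x := by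
      simpa using (((hasDerivAt_id x).sub_const x₀).const_mul γ).add_const 1
    refine h1.congr_of_eventuallyEq ?_
    filter_upwards [Ioo_mem_nhds hx.1 hx.2] with y hy
    exact hmid y hy.1.le hy.2.le
  -- far-away points of S
  have hfar : ∀ x ∈ S, x ≠ x₀ → (x ≤ x₀ - 10 * Δ ∨ x₀ + 10 * Δ ≤ x) := by
    intro x hxS hne
    have hgap := hΔgap x hxS x₀ hx₀ hne
    rcases lt_or_gt_of_ne hne with h | h
    · left
      rw [abs_of_neg (by linarith : x - x₀ < 0)] at hgap
      linarith
    · right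
      rw [abs_of_pos (by linarith : (0:ℝ) < x - x₀)] at hgap
      linarith
  have hzeroder : ∀ x ∈ S, x ≠ x₀ → HasDerivAt ψ 0 x := by
    intro x hxS hne
    refine (hasDerivAt_const x (0:ℝ)).congr_of_eventuallyEq ?_
    filter_upwards [Ioo_mem_nhds (by linarith : x - Δ < x) (by linarith : x < x + Δ)]
      with y hy
    rcases hfar x hxS hne with h | h
    · exact hL y (by have := hy.2; simp only [Set.mem_Ioo] at hy; linarith [hy.2])
    · exact hR y (by simp only [Set.mem_Ioo] at hy; linarith [hy.1])
  refine ⟨hL, hR, hx₀val, hder, ?_, ?_, ?_, ?_⟩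
  · refine ⟨1/Δ - γ, -((1/Δ - γ) * (x₀ - 2*Δ)), ?_⟩
    intro x hx
    rw [hψx, max_eq_left (by linarith [hx.1] : (0:ℝ) ≤ x - (x₀ - 2*Δ)),
      max_eq_right (by linarith [hx.2] : x - (x₀ - Δ) ≤ 0),
      max_eq_right (by linarith [hx.2] : x - (x₀ + Δ) ≤ 0),
      max_eq_right (by linarith [hx.2] : x - (x₀ + 2*Δ) ≤ 0)]
    ring
  · refine ⟨-(1/Δ) - γ, -((1/Δ - γ) * (x₀ - 2*Δ) + (-(1/Δ) + 2*γ) * (x₀ - Δ)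
      + (-(1/Δ) - 2*γ) * (x₀ + Δ)), ?_⟩
    intro x hx
    rw [hψx, max_eq_left (by linarith [hx.1] : (0:ℝ) ≤ x - (x₀ - 2*Δ)),
      max_eq_left (by linarith [hx.1] : (0:ℝ) ≤ x - (x₀ - Δ)),
      max_eq_left (by linarith [hx.1] : (0:ℝ) ≤ x - (x₀ + Δ)),
      max_eq_right (by linarith [hx.2] : x - (x₀ + 2*Δ) ≤ 0)]
    ring
  · intro x hxS
    by_cases hx : x = x₀
    · simp [hx, hx₀val]
    · rw [if_neg hx]
      rcases hfar x hxS hx with h | h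
      · exact hL x (by linarith)
      · exact hR x (by linarith)
  · intro x hxS
    by_cases hx : x = x₀
    · subst hx
      rw [if_pos rfl]
      exact hder x ⟨by linarith, by linarith⟩
    · rw [if_neg hx]
      exact hzeroder x hxS hx
end

section
/- Let d_in ≥ 1 and let X ⊂ ℝ^{d_in} be a finite set. Let 0 < Δ ≤ (1/10)·min(1, g_X), where g_X is the minimum of |u − u'| over distinct values u, u' occurring in the same coordinate of points of X. Fix x₀ ∈ X, a value c ∈ ℝ, and γ₁,…,γ_{d_in} ∈ ℝ. For each i ∈ {1,…,d_in} and b ∈ {0,1}, let ψ_i^{(b)} : ℝ → ℝ be any differentiable function such that, for every real u occurring as the i-th coordinate of some point of X, ψ_i^{(b)}(u) = 1 if u = (x₀)_i and ψ_i^{(b)}(u) = 0 otherwise, and (ψ_i^{(b)})'(u) = b if u = (x₀)_i and 0 otherwise. For each i' ∈ {1,…,d_in}, let τ_{i'} : ℝ → ℝ be any differentiable function with τ_{i'}(u) = 0 and τ_{i'}'(u) = 0 for all u ≤ d_in − 2Δ, and τ_{i'}(u) = c·1[i' = 1] + γ_{i'}·(u − d_in) for all u ≥ d_in − Δ. Define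 Ψ(x) := Σ_{i'=1}^{d_in} τ_{i'}( Σ_{i=1}^{d_in} ψ_i^{(1[i=i'])}(x_i) ). Then for every x ∈ X: Ψ(x) = c if x = x₀ and Ψ(x) = 0 otherwise; moreover Ψ is differentiable at every x ∈ X with ∂Ψ/∂x_i (x) = γ_i·1[x = x₀] for every i ∈ {1,…,d_in}. -/
/-!
On `X` every `ψ_i^{(b)}(x_i)` is the indicator of `x_i = (x₀)_i`, so each inner sum counts the
coordinates in which `x` agrees with `x₀`: it equals `d_in` at `x₀` and is at most
`d_in - 1 ≤ d_in - 2Δ` elsewhere. Hence at `x ≠ x₀` every `τ_{i'}` is evaluated in its flat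
region and `Ψ` vanishes to first order, while at `x₀` every `τ_{i'}` is evaluated at `d_in`,
where it is affine with value `c·1[i' = 1]` and slope `γ_{i'}`. By the chain rule,
`∂Ψ/∂x_i (x₀) = Σ_{i'} γ_{i'} (ψ_i^{(1[i=i'])})'((x₀)_i) = γ_i`.
-/

open Finset

section CoordinateCount

variable {ι : Type*} [Fintype ι]

theorem sum_apply_coord_eq_card_agree {f : ι → ℝ → ℝ} {x x₀ : ι → ℝ}
    (hf : ∀ i, f i (x i) = if x i = x₀ i then 1 else 0) :
    ∑ i, f i (x i) = #{i | x i = x₀ i} := by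
  simp only [hf, sum_boole]

theorem card_agree_lt_of_ne {x x₀ : ι → ℝ} (hne : x ≠ x₀) :
    #{i | x i = x₀ i} < Fintype.card ι := by
  rw [card_lt_iff_ne_univ, Ne, filter_eq_self]
  exact fun h => hne (funext fun i => h i (mem_univ i))

end CoordinateCount

section Calculus

variable {ι κ : Type*} [Fintype ι] [Fintype κ]

theorem hasFDerivAt_sum_apply_coord {f : ι → ℝ → ℝ} {x : ι → ℝ}
    (hf : ∀ i, DifferentiableAt ℝ (f i) (x i)) :
    HasFDerivAt (fun y : ι → ℝ => ∑ i, f i (y i))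
      (∑ i, deriv (f i) (x i) • (ContinuousLinearMap.proj i : (ι → ℝ) →L[ℝ] ℝ)) x :=
  HasFDerivAt.fun_sum fun i _ => (hf i).hasDerivAt.comp_hasFDerivAt x (hasFDerivAt_apply i x)

theorem hasFDerivAt_sum_comp_sum_apply_coord {g : κ → ℝ → ℝ} {f : κ → ι → ℝ → ℝ}
    {x : ι → ℝ} (hg : ∀ k, Differentiable ℝ (g k)) (hf : ∀ k i, Differentiable ℝ (f k i)) :
    HasFDerivAt (fun y : ι → ℝ => ∑ k, g k (∑ i, f k i (y i)))
      (∑ k, deriv (g k) (∑ i, f k i (x i)) •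
        ∑ i, deriv (f k i) (x i) • (ContinuousLinearMap.proj i : (ι → ℝ) →L[ℝ] ℝ)) x :=
  HasFDerivAt.fun_sum fun k _ =>
    (hg k _).hasDerivAt.comp_hasFDerivAt x (hasFDerivAt_sum_apply_coord fun i => hf k i _)

theorem fderiv_sum_comp_sum_apply_coord_single [DecidableEq ι] {g : κ → ℝ → ℝ}
    {f : κ → ι → ℝ → ℝ} {x : ι → ℝ} (hg : ∀ k, Differentiable ℝ (g k))
    (hf : ∀ k i, Differentiable ℝ (f k i)) (j : ι) :
    fderiv ℝ (fun y : ι → ℝ => ∑ k, g k (∑ i, f k i (y i))) x (Pi.single j 1)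
      = ∑ k, deriv (g k) (∑ i, f k i (x i)) * deriv (f k j) (x j) := by
  rw [(hasFDerivAt_sum_comp_sum_apply_coord hg hf).fderiv]
  simp [Pi.single_apply]

theorem deriv_eq_of_eq_affine_of_ge {f : ℝ → ℝ} {p δ a b : ℝ} (hδ : 0 < δ)
    (hf : ∀ u, p - δ ≤ u → f u = a + b * (u - p)) : deriv f p = b := by
  have hev : f =ᶠ[nhds p] fun u => a + b * (u - p) := by
    filter_upwards [Ioi_mem_nhds (show p - δ < p by linarith)] with u hu
    exact hf u hu.le
  rw [hev.deriv_eq]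
  simp

end Calculus

theorem statement3_general (din : ℕ) (hdin : 1 ≤ din)
    (X : Finset (Fin din → ℝ))
    (Δ : ℝ) (hΔ0 : 0 < Δ) (hΔ1 : Δ ≤ 1 / 10)
    (x₀ : Fin din → ℝ) (hx₀ : x₀ ∈ X)
    (c : ℝ) (γ : Fin din → ℝ)
    (ψ : Fin din → Bool → ℝ → ℝ)
    (hψdiff : ∀ (i : Fin din) (bb : Bool), Differentiable ℝ (ψ i bb))
    (hψval : ∀ (i : Fin din) (bb : Bool), ∀ x ∈ X,
      ψ i bb (x i) = if x i = x₀ i then 1 else 0)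
    (hψder : ∀ (i : Fin din) (bb : Bool), ∀ x ∈ X,
      deriv (ψ i bb) (x i) = if x i = x₀ i then (if bb then (1 : ℝ) else 0) else 0)
    (τ : Fin din → ℝ → ℝ)
    (hτdiff : ∀ i' : Fin din, Differentiable ℝ (τ i'))
    (hτ0 : ∀ i' : Fin din, ∀ u : ℝ, u ≤ (din : ℝ) - 2 * Δ →
      τ i' u = 0 ∧ deriv (τ i') u = 0)
    (hτ1 : ∀ i' : Fin din, ∀ u : ℝ, (din : ℝ) - Δ ≤ u →
      τ i' u = (if i' = (⟨0, hdin⟩ : Fin din) then c else 0) + γ i' * (u - din)) :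
    ∀ Ψ : (Fin din → ℝ) → ℝ,
      Ψ = (fun x => ∑ i' : Fin din, τ i' (∑ i : Fin din, ψ i (decide (i = i')) (x i))) →
      (∀ x ∈ X, Ψ x = if x = x₀ then c else 0) ∧
      (∀ x ∈ X, DifferentiableAt ℝ Ψ x ∧
        ∀ i : Fin din, fderiv ℝ Ψ x (Pi.single i 1) = if x = x₀ then γ i else 0) := by
  rintro Ψ rfl
  have hsum_x₀ (i' : Fin din) : ∑ i, ψ i (decide (i = i')) (x₀ i) = din := by
    simp [sum_apply_coord_eq_card_agree fun i => hψval i _ x₀ hx₀]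
  have hsum_ne {x} (hx : x ∈ X) (hne : x ≠ x₀) (i' : Fin din) :
      ∑ i, ψ i (decide (i = i')) (x i) ≤ din - 2 * Δ := by
    have hlt := card_agree_lt_of_ne hne
    rw [Fintype.card_fin] at hlt
    rw [sum_apply_coord_eq_card_agree fun i => hψval i _ x hx]
    have : (#{i | x i = x₀ i} : ℝ) + 1 ≤ din := by exact_mod_cast hlt
    linarith
  refine ⟨fun x hx => ?_, fun x hx => ⟨(hasFDerivAt_sum_comp_sum_apply_coord
      (f := fun i' i => ψ i (decide (i = i'))) hτdiff fun _ _ => hψdiff _ _).differentiableAt,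
    fun j => ?_⟩⟩
  · split_ifs with hx_eq
    · subst hx_eq
      simp [hsum_x₀, hτ1 _ din (by linarith)]
    · exact sum_eq_zero fun i' _ => (hτ0 i' _ (hsum_ne hx hx_eq i')).1
  · rw [fderiv_sum_comp_sum_apply_coord_single (f := fun i' i => ψ i (decide (i = i')))
      hτdiff (fun _ _ => hψdiff _ _) j]
    split_ifs with hx_eq
    · subst hx_eq
      simp [hsum_x₀, deriv_eq_of_eq_affine_of_ge hΔ0 (hτ1 _), hψder _ _ x hx]
    · simp [(hτ0 _ _ (hsum_ne hx hx_eq _)).2]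

/-- multivariate indicator with prescribed gradient, assembled from
univariate indicators `ψ` and thresholds `τ`: the function
`Ψ(x) = Σ_{i'} τ_{i'}( Σ_i ψ_i^{(1[i=i'])}(x_i) )` equals `c·1[x = x₀]` on `X` and has
partial derivatives `∂Ψ/∂x_i (x) = γ_i·1[x = x₀]` at every `x ∈ X`. -/
theorem statement3 (din : ℕ) (hdin : 1 ≤ din)
    (X : Finset (Fin din → ℝ))
    (Δ : ℝ) (hΔ0 : 0 < Δ) (hΔ1 : Δ ≤ 1 / 10)
    (hΔgap : ∀ x ∈ X, ∀ x' ∈ X, ∀ i : Fin din, x i ≠ x' i → Δ ≤ |x i - x' i| / 10)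
    (x₀ : Fin din → ℝ) (hx₀ : x₀ ∈ X)
    (c : ℝ) (γ : Fin din → ℝ)
    (ψ : Fin din → Bool → ℝ → ℝ)
    (hψdiff : ∀ (i : Fin din) (bb : Bool), Differentiable ℝ (ψ i bb))
    (hψval : ∀ (i : Fin din) (bb : Bool), ∀ x ∈ X,
      ψ i bb (x i) = if x i = x₀ i then 1 else 0)
    (hψder : ∀ (i : Fin din) (bb : Bool), ∀ x ∈ X,
      deriv (ψ i bb) (x i) = if x i = x₀ i then (if bb then (1 : ℝ) else 0) else 0)
    (τ : Fin din → ℝ → ℝ)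
    (hτdiff : ∀ i' : Fin din, Differentiable ℝ (τ i'))
    (hτ0 : ∀ i' : Fin din, ∀ u : ℝ, u ≤ (din : ℝ) - 2 * Δ →
      τ i' u = 0 ∧ deriv (τ i') u = 0)
    (hτ1 : ∀ i' : Fin din, ∀ u : ℝ, (din : ℝ) - Δ ≤ u →
      τ i' u = (if i' = (⟨0, hdin⟩ : Fin din) then c else 0) + γ i' * (u - din)) :
    ∀ Ψ : (Fin din → ℝ) → ℝ,
      Ψ = (fun x => ∑ i' : Fin din, τ i' (∑ i : Fin din, ψ i (decide (i = i')) (x i))) →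
      (∀ x ∈ X, Ψ x = if x = x₀ then c else 0) ∧
      (∀ x ∈ X, DifferentiableAt ℝ Ψ x ∧
        ∀ i : Fin din, fderiv ℝ Ψ x (Pi.single i 1) = if x = x₀ then γ i else 0) :=
  statement3_general din hdin X Δ hΔ0 hΔ1 x₀ hx₀ c γ ψ hψdiff hψval hψder τ hτdiff hτ0 hτ1
end

section
/- Let d_in, d_out ≥ 1 be integers, let X ⊂ ℝ^{d_in} and Y ⊂ ℝ^{d_out} be finite sets, let X_i (respectively Y_i) denote the set of all real values occurring as a coordinate of a point of X (respectively Y), assume X_i = Y_i, and let G = {0, 1}. Then there exists a finite set U ⊂ ℝ with 0 ∈ U and |U| ≤ 24|X_i| + 5, depending only on X, Y, G, such that: for every f : X → Y and every g : X × {1,…,d_out} × {1,…,d_in} → G, there exist affine layers W₁ : ℝ^{d_in} → ℝ^{d₁}, W₁' : ℝ^{d₁} → ℝ^{d₁'}, W₁⁺ : ℝ^{d₁'} → ℝ^{d₂}, W₂' : ℝ^{d₂} → ℝ^{d₂'}, W₂⁺ : ℝ^{d₂'} → ℝ^{d_out}, with d₁ = 10·d_in·|X|, d₁' = 2·d_in·|X|,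 d₂ = 6·d_in·d_out·|X|, d₂' = 2·d_in·d_out·|X|, all of whose matrix entries and bias entries lie in U, such that the network f_net := W₂⁺ ∘ W₂' ∘ σ ∘ W₁⁺ ∘ W₁' ∘ σ ∘ W₁ satisfies f_net(x) = f(x) for all x ∈ X and is differentiable at every x ∈ X with ∂(f_net)_i/∂x_j (x) = g(x, i, j) for all i ∈ {1,…,d_out}, j ∈ {1,…,d_in}. -/
/-- The set of all real values occurring as a coordinate of a point of a finite set
of vectors. -/
noncomputable def coordVals {d : ℕ} (X : Finset (Fin d → ℝ)) : Finset ℝ :=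
  X.biUnion fun x => Finset.univ.image x

namespace NetAux
open Finset

def eP3 (a b c : ℕ) : (Fin a × Fin b) × Fin c ≃ Fin (a * b * c) :=
  (finProdFinEquiv.prodCongr (Equiv.refl (Fin c))).trans finProdFinEquiv

def eP4 (a b c d : ℕ) : ((Fin a × Fin b) × Fin c) × Fin d ≃ Fin (a * b * c * d) :=
  ((eP3 a b c).prodCongr (Equiv.refl (Fin d))).trans finProdFinEquiv

noncomputable def tM {α β : Type*} [Fintype α] [Fintype β] {N K : ℕ}
    (e : α ≃ Fin N) (e' : β ≃ Fin K) (M : α → β → ℝ) : Matrix (Fin N) (Fin K) ℝ :=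
  Matrix.of fun a b => M (e.symm a) (e'.symm b)

noncomputable def tV {α : Type*} [Fintype α] {N : ℕ} (e : α ≃ Fin N) (v : α → ℝ) :
    Fin N → ℝ := fun a => v (e.symm a)

lemma tM_mulVec {α β : Type*} [Fintype α] [Fintype β] {N K : ℕ}
    (e : α ≃ Fin N) (e' : β ≃ Fin K) (M : α → β → ℝ) (x : Fin K → ℝ) (a : α) :
    (tM e e' M).mulVec x (e a) = ∑ b : β, M a b * x (e' b) := by
  simp only [tM, Matrix.mulVec, dotProduct, Matrix.of_apply, Equiv.symm_apply_apply]
  exact (Fintype.sum_equiv e' (fun b => M a b * x (e' b))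
    (fun b => M a (e'.symm b) * x b) (fun b => by simp)).symm

lemma tM_apply {α β : Type*} [Fintype α] [Fintype β] {N K : ℕ}
    (e : α ≃ Fin N) (e' : β ≃ Fin K) (M : α → β → ℝ) (a : Fin N) (b : Fin K) :
    tM e e' M a b = M (e.symm a) (e'.symm b) := rfl

lemma tV_apply {α : Type*} [Fintype α] {N : ℕ} (e : α ≃ Fin N) (v : α → ℝ) (a : Fin N) :
    tV e v a = v (e.symm a) := rfl

end NetAux

namespace NetAux
open Finset

section Layers
variable {din dout n : ℕ}

/-- coefficient of first-layer unit `u` (applied to coordinate `j`). -/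
def w1c : Fin 10 → ℝ := ![1, 1, 1, -1, 1, -1, 0, 0, 0, 0]
/-- bias of first-layer unit `u` for data value `v`. -/
def w1b (δ ε v : ℝ) : Fin 10 → ℝ :=
  ![δ - v, -v - δ, -v - δ, v - δ, -v - ε, v - ε, 0, 0, 0, 0]

def W1f : ((Fin 10 × Fin din) × Fin n) → Fin din → ℝ :=
  fun z k => if k = z.1.2 then w1c z.1.1 else 0
def c1f (pt : Fin n → Fin din → ℝ) (δ ε : ℝ) : ((Fin 10 × Fin din) × Fin n) → ℝ :=
  fun z => w1b δ ε (pt z.2 z.1.2) z.1.1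

def w1'a : Fin 10 → ℝ := ![1, -1, 0, 0, 0, 0, 0, 0, 0, 0]
def w1'b : Fin 10 → ℝ := ![0, 0, 1, 1, -1, -1, 0, 0, 0, 0]

def W1'f : ((Fin 2 × Fin din) × Fin n) → ((Fin 10 × Fin din) × Fin n) → ℝ :=
  fun w z => if z.2 = w.2 then
      (if w.1.1 = 0 then (if z.1.2 = w.1.2 then w1'a z.1.1 else 0) else w1'b z.1.1)
    else 0
def c1'f (δ : ℝ) : ((Fin 2 × Fin din) × Fin n) → ℝ := fun w => if w.1.1 = 0 then -δ else 0

def tRamp (pt : Fin n → Fin din → ℝ) (δ : ℝ) (x : Fin din → ℝ) (p : Fin n) (j : Fin din) : ℝ :=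
  max (x j - pt p j + δ) 0 - max (x j - pt p j - δ) 0 - δ

def rho (pt : Fin n → Fin din → ℝ) (δ ε : ℝ) (x : Fin din → ℝ) (p : Fin n) : ℝ :=
  ∑ k, (max (x k - pt p k - δ) 0 + max (pt p k - x k - δ) 0
        - max (x k - pt p k - ε) 0 - max (pt p k - x k - ε) 0)

def aco : Fin 6 → ℝ := ![1, 0, 0, 0, 0, 0]
def bco (cc : ℝ) : Fin 6 → ℝ := ![-3, -3, -cc, 0, 0, 0]
def bia (δ : ℝ) : Fin 6 → ℝ := ![δ, δ, 1, 0, 0, 0]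

def W1pf (cc : ℝ) : (((Fin 6 × Fin din) × Fin dout) × Fin n) → ((Fin 2 × Fin din) × Fin n) → ℝ :=
  fun r w => if w.2 = r.2 ∧ w.1.2 = r.1.1.2 then
      (if w.1.1 = 0 then aco r.1.1.1 else bco cc r.1.1.1) else 0
def c1pf (δ : ℝ) : (((Fin 6 × Fin din) × Fin dout) × Fin n) → ℝ := fun r => bia δ r.1.1.1

def gco (gval : ℝ) : Fin 6 → ℝ := ![gval, -gval, 0, 0, 0, 0]
def fco (fval : ℝ) : Fin 6 → ℝ := ![0, 0, fval, 0, 0, 0]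

def W2'f (fv : Fin n → Fin dout → ℝ) (gv : Fin n → Fin dout → Fin din → ℝ) (j0 : Fin din) :
    (((Fin 2 × Fin din) × Fin dout) × Fin n) → (((Fin 6 × Fin din) × Fin dout) × Fin n) → ℝ :=
  fun v r => if r.2 = v.2 ∧ r.1.2 = v.1.2 ∧ r.1.1.2 = v.1.1.2 then
      (if v.1.1.1 = 0 then gco (gv v.2 v.1.2 v.1.1.2) r.1.1.1
       else (if v.1.1.2 = j0 then fco (fv v.2 v.1.2) r.1.1.1 else 0))
    else 0

def W2pf : Fin dout → (((Fin 2 × Fin din) × Fin dout) × Fin n) → ℝ :=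
  fun i v => if v.1.2 = i then 1 else 0

end Layers
end NetAux

namespace NetAux
open Finset

section Calc
variable {din dout n : ℕ} (pt : Fin n → Fin din → ℝ) (δ ε : ℝ)

lemma layer2_eq (x : Fin din → ℝ) (w : (Fin 2 × Fin din) × Fin n) :
    ((tM (eP3 2 din n) (eP3 10 din n) W1'f).mulVec
      (relu ((tM (eP3 10 din n) (Equiv.refl (Fin din)) W1f).mulVec x
        + tV (eP3 10 din n) (c1f pt δ ε))) + tV (eP3 2 din n) (c1'f δ)) (eP3 2 din n w)
    = if w.1.1 = 0 then tRamp pt δ x w.2 w.1.2 else rho pt δ ε x w.2 := by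
  have hL1 : ∀ z : (Fin 10 × Fin din) × Fin n,
      relu ((tM (eP3 10 din n) (Equiv.refl (Fin din)) W1f).mulVec x
        + tV (eP3 10 din n) (c1f pt δ ε)) (eP3 10 din n z)
      = max (w1c z.1.1 * x z.1.2 + w1b δ ε (pt z.2 z.1.2) z.1.1) 0 := by
    intro z
    have := tM_mulVec (eP3 10 din n) (Equiv.refl (Fin din)) W1f x z
    simp only [relu, Pi.add_apply, this, Equiv.refl_apply, tV, Equiv.symm_apply_apply]
    congr 1
    simp [W1f, c1f, ite_mul]
  obtain ⟨⟨s, j⟩, p⟩ := w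
  simp only [Pi.add_apply, tM_mulVec, hL1, tV, Equiv.symm_apply_apply]
  fin_cases s
  · simp only [W1'f, c1'f, Fintype.sum_prod_type, ite_mul, zero_mul, if_true,
      Finset.sum_ite_eq', Finset.mem_univ]
    simp [Fin.sum_univ_succ, w1'a, w1c, w1b, tRamp]
    ring_nf
  · simp only [W1'f, c1'f, Fintype.sum_prod_type, ite_mul, zero_mul,
      Finset.sum_ite_eq', Finset.mem_univ]
    simp only [Fin.mk_one, Fin.one_eq_zero_iff, if_false, reduceIte]
    simp only [show (0 + 2 = 1) = False from by simp, if_false]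
    rw [Finset.sum_comm, rho, add_zero]
    refine Finset.sum_congr rfl fun k _ => ?_
    simp [Fin.sum_univ_succ, w1'b, w1c, w1b]
    ring_nf

lemma layer3_eq (cc : ℝ) (x : Fin din → ℝ) (Y : Fin (2*din*n) → ℝ)
    (hY : ∀ w : (Fin 2 × Fin din) × Fin n, Y (eP3 2 din n w)
      = if w.1.1 = 0 then tRamp pt δ x w.2 w.1.2 else rho pt δ ε x w.2)
    (r : ((Fin 6 × Fin din) × Fin dout) × Fin n) :
    relu ((tM (eP4 6 din dout n) (eP3 2 din n) (W1pf cc)).mulVec Y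
      + tV (eP4 6 din dout n) (c1pf δ)) (eP4 6 din dout n r)
    = max (aco r.1.1.1 * tRamp pt δ x r.2 r.1.1.2 + bco cc r.1.1.1 * rho pt δ ε x r.2
        + bia δ r.1.1.1) 0 := by
  simp only [relu, Pi.add_apply, tM_mulVec, tV, Equiv.symm_apply_apply, hY]
  congr 1
  simp only [W1pf, c1pf, Fintype.sum_prod_type, ite_and, ite_mul, zero_mul,
    Finset.sum_ite_eq', Finset.mem_univ, if_true]
  simp [Fin.sum_univ_two]

lemma layer4_eq (cc : ℝ) (fv : Fin n → Fin dout → ℝ) (gv : Fin n → Fin dout → Fin din → ℝ)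
    (j0 : Fin din) (x : Fin din → ℝ) (Z : Fin (6*din*dout*n) → ℝ)
    (hZ : ∀ r : ((Fin 6 × Fin din) × Fin dout) × Fin n, Z (eP4 6 din dout n r)
      = max (aco r.1.1.1 * tRamp pt δ x r.2 r.1.1.2 + bco cc r.1.1.1 * rho pt δ ε x r.2
          + bia δ r.1.1.1) 0)
    (v : ((Fin 2 × Fin din) × Fin dout) × Fin n) :
    (tM (eP4 2 din dout n) (eP4 6 din dout n) (W2'f fv gv j0)).mulVec Z (eP4 2 din dout n v)
    = if v.1.1.1 = 0 then
        gv v.2 v.1.2 v.1.1.2 *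
          (max (tRamp pt δ x v.2 v.1.1.2 + δ - 3 * rho pt δ ε x v.2) 0
            - max (δ - 3 * rho pt δ ε x v.2) 0)
      else (if v.1.1.2 = j0 then fv v.2 v.1.2 * max (1 - cc * rho pt δ ε x v.2) 0 else 0) := by
  simp only [tM_mulVec, hZ]
  simp only [W2'f, Fintype.sum_prod_type, ite_and, ite_mul, zero_mul,
    Finset.sum_ite_eq', Finset.mem_univ, if_true]
  obtain ⟨⟨⟨s, j⟩, i⟩, p⟩ := v
  fin_cases s
  · simp [Fin.sum_univ_succ, gco, aco, bco, bia]
    ring_nf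
  · simp only [Fin.mk_one, Fin.one_eq_zero_iff, if_false, reduceIte]
    simp only [show (0 + 2 = 1) = False from by simp, if_false]
    split
    · simp [Fin.sum_univ_succ, fco, aco, bco, bia]
      ring_nf
      tauto
    · simp [Fin.sum_univ_succ]

lemma layer5_eq (cc : ℝ) (fv : Fin n → Fin dout → ℝ) (gv : Fin n → Fin dout → Fin din → ℝ)
    (j0 : Fin din) (x : Fin din → ℝ) (V2 : Fin (2*din*dout*n) → ℝ)
    (hV2 : ∀ v : ((Fin 2 × Fin din) × Fin dout) × Fin n, V2 (eP4 2 din dout n v)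
      = if v.1.1.1 = 0 then
          gv v.2 v.1.2 v.1.1.2 *
            (max (tRamp pt δ x v.2 v.1.1.2 + δ - 3 * rho pt δ ε x v.2) 0
              - max (δ - 3 * rho pt δ ε x v.2) 0)
        else (if v.1.1.2 = j0 then fv v.2 v.1.2 * max (1 - cc * rho pt δ ε x v.2) 0 else 0))
    (i : Fin dout) :
    (tM (Equiv.refl (Fin dout)) (eP4 2 din dout n) W2pf).mulVec V2 i
    = (∑ p, ∑ j, gv p i j *
        (max (tRamp pt δ x p j + δ - 3 * rho pt δ ε x p) 0
          - max (δ - 3 * rho pt δ ε x p) 0))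
      + ∑ p, fv p i * max (1 - cc * rho pt δ ε x p) 0 := by
  have h := tM_mulVec (Equiv.refl (Fin dout)) (eP4 2 din dout n) W2pf V2 i
  simp only [Equiv.refl_apply] at h
  rw [h]
  simp only [hV2, W2pf]
  simp only [Fintype.sum_prod_type, ite_mul, zero_mul, one_mul,
    Finset.sum_ite_eq', Finset.mem_univ, if_true]
  simp only [Fin.sum_univ_two]
  simp only [show ((0:Fin 2) = 0) = True from by simp, show ((1:Fin 2) = 0) = False from by simp,
    if_true, if_false]
  simp only [Finset.sum_ite_irrel, Finset.sum_const_zero, Finset.sum_ite_eq',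
    Finset.mem_univ, if_true]
  rw [Finset.sum_comm]

end Calc

section Analysis
open Filter Topology
variable {din dout n : ℕ}

lemma tRamp_le (pt : Fin n → Fin din → ℝ) {δ : ℝ} (h : 0 ≤ δ) (x : Fin din → ℝ)
    (p : Fin n) (j : Fin din) : tRamp pt δ x p j ≤ δ := by
  have h1 : x j - pt p j + δ ≤ max (x j - pt p j - δ) 0 + 2*δ := by
    have := le_max_left (x j - pt p j - δ) 0; linarith
  have h2 : (0:ℝ) ≤ max (x j - pt p j - δ) 0 + 2*δ := by
    have := le_max_right (x j - pt p j - δ) 0; linarith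
  have := max_le h1 h2
  unfold tRamp; linarith

lemma key (pt : Fin n → Fin din → ℝ) (fv : Fin n → Fin dout → ℝ)
    (gv : Fin n → Fin dout → Fin din → ℝ) {γ : ℝ} (hγ : 0 < γ)
    (V : Finset ℝ) (hmem : ∀ p k, pt p k ∈ V)
    (hsep : ∀ v ∈ V, ∀ w ∈ V, v ≠ w → γ ≤ |v - w|) (q : Fin n)
    (hinj : ∀ p, p ≠ q → ∃ k, pt p k ≠ pt q k) :
    ∀ᶠ x in 𝓝 (pt q), ∀ i : Fin dout,
      ((∑ p, ∑ j, gv p i j *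
          (max (tRamp pt (γ/4) x p j + γ/4 - 3 * rho pt (γ/4) (γ/2) x p) 0
            - max (γ/4 - 3 * rho pt (γ/4) (γ/2) x p) 0))
        + ∑ p, fv p i * max (1 - (4/γ) * rho pt (γ/4) (γ/2) x p) 0)
      = fv q i + ∑ j, gv q i j * (x j - pt q j) := by
  have hev : ∀ᶠ x in 𝓝 (pt q), ∀ k, |x k - pt q k| < γ/8 := by
    refine Metric.eventually_nhds_iff.2 ⟨γ/8, by positivity, fun y hy k => ?_⟩
    calc |y k - pt q k| = dist (y k) (pt q k) := (Real.dist_eq _ _).symm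
    _ ≤ dist y (pt q) := dist_le_pi_dist _ _ k
    _ < γ/8 := hy
  filter_upwards [hev] with x hx i
  have hrq : rho pt (γ/4) (γ/2) x q = 0 := by
    unfold rho; apply Finset.sum_eq_zero; intro k _
    have h' := abs_lt.1 (hx k)
    rw [max_eq_right (by linarith), max_eq_right (by linarith),
      max_eq_right (by linarith), max_eq_right (by linarith)]; ring
  have htq : ∀ j, tRamp pt (γ/4) x q j = x j - pt q j := by
    intro j; have h' := abs_lt.1 (hx j); unfold tRamp
    rw [max_eq_left (by linarith), max_eq_right (by linarith)]; ring
  have hrp : ∀ p, p ≠ q → γ/4 ≤ rho pt (γ/4) (γ/2) x p := by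
    intro p hpq
    obtain ⟨k0, hk0⟩ := hinj p hpq
    have hS : ∀ k, (max (x k - pt p k - γ/4) 0 + max (pt p k - x k - γ/4) 0
        - max (x k - pt p k - γ/2) 0 - max (pt p k - x k - γ/2) 0)
        = if pt q k = pt p k then 0 else γ/4 := by
      intro k
      have h' := abs_lt.1 (hx k)
      by_cases hk : pt q k = pt p k
      · rw [if_pos hk, ← hk]
        rw [max_eq_right (by linarith), max_eq_right (by linarith),
          max_eq_right (by linarith), max_eq_right (by linarith)]; ring
      · rw [if_neg hk]
        have hd := hsep _ (hmem q k) _ (hmem p k) hk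
        rcases le_or_gt (pt q k) (pt p k) with hle | hlt
        · have hge : γ ≤ pt p k - pt q k := by
            rw [abs_sub_comm] at hd; rwa [abs_of_nonneg (by linarith)] at hd
          rw [max_eq_right (by linarith), max_eq_left (by linarith),
            max_eq_right (by linarith), max_eq_left (by linarith)]; ring
        · have hge : γ ≤ pt q k - pt p k := by
            rwa [abs_of_nonneg (by linarith)] at hd
          rw [max_eq_left (by linarith), max_eq_right (by linarith),
            max_eq_left (by linarith), max_eq_right (by linarith)]; ring
    have hne : pt q k0 ≠ pt p k0 := fun h => hk0 h.symm
    have h1 : γ/4 = (max (x k0 - pt p k0 - γ/4) 0 + max (pt p k0 - x k0 - γ/4) 0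
        - max (x k0 - pt p k0 - γ/2) 0 - max (pt p k0 - x k0 - γ/2) 0) := by
      rw [hS k0, if_neg hne]
    rw [rho]
    refine le_trans (le_of_eq h1) ?_
    refine Finset.single_le_sum (f := fun k => max (x k - pt p k - γ/4) 0
      + max (pt p k - x k - γ/4) 0 - max (x k - pt p k - γ/2) 0
      - max (pt p k - x k - γ/2) 0) (fun k _ => ?_) (Finset.mem_univ k0)
    rw [hS k]; split <;> positivity
  have hsum1 : (∑ p, ∑ j, gv p i j *
      (max (tRamp pt (γ/4) x p j + γ/4 - 3 * rho pt (γ/4) (γ/2) x p) 0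
        - max (γ/4 - 3 * rho pt (γ/4) (γ/2) x p) 0))
      = ∑ j, gv q i j * (x j - pt q j) := by
    rw [Finset.sum_eq_single q]
    · refine Finset.sum_congr rfl fun j _ => ?_
      have h' := abs_lt.1 (hx j)
      rw [hrq, htq j, max_eq_left (by linarith), max_eq_left (by linarith)]
      ring
    · intro p _ hpq
      refine Finset.sum_eq_zero fun j _ => ?_
      have h1 := hrp p hpq
      have h2 := tRamp_le pt (by positivity : (0:ℝ) ≤ γ/4) x p j
      rw [max_eq_right (by linarith), max_eq_right (by linarith)]
      ring
    · intro h; exact absurd (Finset.mem_univ q) h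
  have hsum2 : (∑ p, fv p i * max (1 - (4/γ) * rho pt (γ/4) (γ/2) x p) 0) = fv q i := by
    rw [Finset.sum_eq_single q]
    · rw [hrq]; norm_num
    · intro p _ hpq
      have h1 := hrp p hpq
      have h2 : (1:ℝ) ≤ (4/γ) * rho pt (γ/4) (γ/2) x p := by
        have h3 : (4/γ) * (γ/4) ≤ (4/γ) * rho pt (γ/4) (γ/2) x p :=
          mul_le_mul_of_nonneg_left h1 (by positivity)
        have h4 : (4/γ) * (γ/4) = 1 := by field_simp
        linarith
      rw [max_eq_right (by linarith), mul_zero]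
    · intro h; exact absurd (Finset.mem_univ q) h
  rw [hsum1, hsum2]; ring

noncomputable def Lmap (din dout : ℕ) (G : Fin dout → Fin din → ℝ) :
    (Fin din → ℝ) →L[ℝ] (Fin dout → ℝ) :=
  ContinuousLinearMap.pi (fun i => ∑ j, G i j • ContinuousLinearMap.proj j)

lemma Lmap_apply (G : Fin dout → Fin din → ℝ) (v : Fin din → ℝ) (i : Fin dout) :
    Lmap din dout G v i = ∑ j, G i j * v j := by
  simp [Lmap]

lemma affine_hasFDeriv (c : Fin dout → ℝ) (G : Fin dout → Fin din → ℝ) (x' : Fin din → ℝ) :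
    HasFDerivAt (fun x : Fin din → ℝ => fun i => c i + ∑ j, G i j * (x j - x' j))
      (Lmap din dout G) x' := by
  have h : (fun x : Fin din → ℝ => fun i => c i + ∑ j, G i j * (x j - x' j))
      = fun x => (fun i => c i - ∑ j, G i j * x' j) + Lmap din dout G x := by
    funext x; funext i
    simp only [Pi.add_apply, Lmap_apply, mul_sub, Finset.sum_sub_distrib]; ring
  rw [h]
  exact (Lmap din dout G).hasFDerivAt.const_add _

lemma Lmap_single (G : Fin dout → Fin din → ℝ) (j : Fin din) (i : Fin dout) :
    Lmap din dout G (Pi.single j (1:ℝ)) i = G i j := by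
  simp [Lmap_apply, Pi.single_apply, mul_ite]

end Analysis
end NetAux


open NetAux Finset Filter Topology in
/-- Corollary 1 of the paper: a single bounded weight support:
assume the coordinate-value sets of `X` and `Y` coincide and the gradient alphabet is
`G = {0,1}`. Then there is a single finite set `U ⊂ ℝ` with `0 ∈ U` and
`|U| ≤ 24·|X_i| + 5`, depending only on `X, Y, G`, such that every `f : X → Y` and
desired Jacobian `g` valued in `{0,1}` is realized — values and partial derivatives at all
points of `X` — by the 5-layer network `W₂⁺ ∘ W₂' ∘ σ ∘ W₁⁺ ∘ W₁' ∘ σ ∘ W₁` with the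
stated layer dimensions, all of whose matrix and bias entries lie in `U`. -/
theorem statement6 (din dout : ℕ) (hdin : 1 ≤ din) (hdout : 1 ≤ dout)
    (X : Finset (Fin din → ℝ)) (Y : Finset (Fin dout → ℝ))
    (hXY : coordVals X = coordVals Y) :
    ∃ U : Finset ℝ, (0 : ℝ) ∈ U ∧ U.card ≤ 24 * (coordVals X).card + 5 ∧
      ∀ f : (Fin din → ℝ) → (Fin dout → ℝ), (∀ x ∈ X, f x ∈ Y) →
      ∀ g : (Fin din → ℝ) → Fin dout → Fin din → ℝ,
        (∀ x ∈ X, ∀ (i : Fin dout) (j : Fin din), g x i j = 0 ∨ g x i j = 1) →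
      ∃ (W1 : Matrix (Fin (10 * din * X.card)) (Fin din) ℝ)
        (c1 : Fin (10 * din * X.card) → ℝ)
        (W1' : Matrix (Fin (2 * din * X.card)) (Fin (10 * din * X.card)) ℝ)
        (c1' : Fin (2 * din * X.card) → ℝ)
        (W1p : Matrix (Fin (6 * din * dout * X.card)) (Fin (2 * din * X.card)) ℝ)
        (c1p : Fin (6 * din * dout * X.card) → ℝ)
        (W2' : Matrix (Fin (2 * din * dout * X.card)) (Fin (6 * din * dout * X.card)) ℝ)
        (c2' : Fin (2 * din * dout * X.card) → ℝ)
        (W2p : Matrix (Fin dout) (Fin (2 * din * dout * X.card)) ℝ)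
        (c2p : Fin dout → ℝ),
        (∀ a b, W1 a b ∈ U) ∧ (∀ a, c1 a ∈ U) ∧
        (∀ a b, W1' a b ∈ U) ∧ (∀ a, c1' a ∈ U) ∧
        (∀ a b, W1p a b ∈ U) ∧ (∀ a, c1p a ∈ U) ∧
        (∀ a b, W2' a b ∈ U) ∧ (∀ a, c2' a ∈ U) ∧
        (∀ a b, W2p a b ∈ U) ∧ (∀ a, c2p a ∈ U) ∧
        ∀ fnet : (Fin din → ℝ) → (Fin dout → ℝ),
          fnet = (fun x =>
            W2p.mulVec (W2'.mulVec (relu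
              (W1p.mulVec (W1'.mulVec (relu (W1.mulVec x + c1)) + c1') + c1p)) + c2')
              + c2p) →
          (∀ x ∈ X, fnet x = f x) ∧
          (∀ x ∈ X, DifferentiableAt ℝ fnet x ∧
            ∀ (i : Fin dout) (j : Fin din),
              fderiv ℝ fnet x (Pi.single j 1) i = g x i j) := by
  classical
  rcases X.eq_empty_or_nonempty with hX | ⟨x₀, hx₀⟩
  · refine ⟨{0}, by simp, by simp, ?_⟩
    intro f hf g hg
    refine ⟨0, 0, 0, 0, 0, 0, 0, 0, 0, 0, by intros; simp, by intros; simp,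
      by intros; simp, by intros; simp, by intros; simp, by intros; simp,
      by intros; simp, by intros; simp, by intros; simp, by intros; simp, ?_⟩
    intro fnet hfnet
    exact ⟨fun x hx => absurd hx (by simp [hX]), fun x hx => absurd hx (by simp [hX])⟩
  · -- main case
    set V := coordVals X with hVdef
    set S := ((V ×ˢ V).filter fun vw => vw.1 ≠ vw.2).image fun vw => |vw.1 - vw.2| with hSdef
    set γ : ℝ := if h : S.Nonempty then S.min' h else 1 with hγdef
    have hγpos : 0 < γ := by
      rw [hγdef]; split_ifs with h
      · obtain ⟨vw, hvw, heq⟩ := Finset.mem_image.1 (S.min'_mem h)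
        rw [← heq]
        exact abs_pos.2 (sub_ne_zero.2 (Finset.mem_filter.1 hvw).2)
      · exact one_pos
    have hsep : ∀ v ∈ V, ∀ w ∈ V, v ≠ w → γ ≤ |v - w| := by
      intro v hv w hw hne
      have hmemS : |v - w| ∈ S :=
        Finset.mem_image.2 ⟨(v, w),
          Finset.mem_filter.2 ⟨Finset.mem_product.2 ⟨hv, hw⟩, hne⟩, rfl⟩
      rw [hγdef, dif_pos ⟨_, hmemS⟩]
      exact Finset.min'_le _ _ hmemS
    set A : Finset ℝ := (Finset.univ : Finset (Fin 7)).image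
      ![0, 1, -1, γ/4, -(γ/4), -3, -(4/γ)] with hAdef
    set U : Finset ℝ := A ∪ V ∪ V.image (fun v => γ/4 - v) ∪ V.image (fun v => -v - γ/4)
      ∪ V.image (fun v => v - γ/4) ∪ V.image (fun v => -v - γ/2)
      ∪ V.image (fun v => v - γ/2) with hUdef
    have hmemA : ∀ u : Fin 7, ![(0:ℝ), 1, -1, γ/4, -(γ/4), -3, -(4/γ)] u ∈ U := by
      intro u
      refine Finset.mem_union_left _ (Finset.mem_union_left _ (Finset.mem_union_left _
        (Finset.mem_union_left _ (Finset.mem_union_left _ (Finset.mem_union_left _ ?_)))))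
      exact Finset.mem_image.2 ⟨u, Finset.mem_univ u, rfl⟩
    have h0U : (0:ℝ) ∈ U := hmemA 0
    have h1U : (1:ℝ) ∈ U := hmemA 1
    have hm1U : (-1:ℝ) ∈ U := hmemA 2
    have hδU : γ/4 ∈ U := hmemA 3
    have hmδU : -(γ/4) ∈ U := hmemA 4
    have h3U : (-3:ℝ) ∈ U := hmemA 5
    have hccU : -(4/γ) ∈ U := hmemA 6
    have hVU : ∀ v ∈ V, v ∈ U := fun v hv =>
      Finset.mem_union_left _ (Finset.mem_union_left _ (Finset.mem_union_left _
        (Finset.mem_union_left _ (Finset.mem_union_left _ (Finset.mem_union_right _ hv)))))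
    have hI1U : ∀ v ∈ V, γ/4 - v ∈ U := fun v hv =>
      Finset.mem_union_left _ (Finset.mem_union_left _ (Finset.mem_union_left _
        (Finset.mem_union_left _ (Finset.mem_union_right _ (Finset.mem_image_of_mem _ hv)))))
    have hI2U : ∀ v ∈ V, -v - γ/4 ∈ U := fun v hv =>
      Finset.mem_union_left _ (Finset.mem_union_left _ (Finset.mem_union_left _
        (Finset.mem_union_right _ (Finset.mem_image_of_mem _ hv))))
    have hI3U : ∀ v ∈ V, v - γ/4 ∈ U := fun v hv =>
      Finset.mem_union_left _ (Finset.mem_union_left _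
        (Finset.mem_union_right _ (Finset.mem_image_of_mem _ hv)))
    have hI4U : ∀ v ∈ V, -v - γ/2 ∈ U := fun v hv =>
      Finset.mem_union_left _ (Finset.mem_union_right _ (Finset.mem_image_of_mem _ hv))
    have hI5U : ∀ v ∈ V, v - γ/2 ∈ U := fun v hv =>
      Finset.mem_union_right _ (Finset.mem_image_of_mem _ hv)
    have hVcard : 1 ≤ V.card := by
      refine Finset.card_pos.2 ⟨x₀ ⟨0, hdin⟩, ?_⟩
      exact Finset.mem_biUnion.2 ⟨x₀, hx₀, Finset.mem_image.2 ⟨⟨0, hdin⟩, Finset.mem_univ _, rfl⟩⟩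
    have hUcard : U.card ≤ 24 * V.card + 5 := by
      have b1 := Finset.card_union_le (A ∪ V ∪ V.image (fun v => γ/4 - v)
        ∪ V.image (fun v => -v - γ/4) ∪ V.image (fun v => v - γ/4)
        ∪ V.image (fun v => -v - γ/2)) (V.image (fun v => v - γ/2))
      have b2 := Finset.card_union_le (A ∪ V ∪ V.image (fun v => γ/4 - v)
        ∪ V.image (fun v => -v - γ/4) ∪ V.image (fun v => v - γ/4))
        (V.image (fun v => -v - γ/2))
      have b3 := Finset.card_union_le (A ∪ V ∪ V.image (fun v => γ/4 - v)
        ∪ V.image (fun v => -v - γ/4)) (V.image (fun v => v - γ/4))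
      have b4 := Finset.card_union_le (A ∪ V ∪ V.image (fun v => γ/4 - v))
        (V.image (fun v => -v - γ/4))
      have b5 := Finset.card_union_le (A ∪ V) (V.image (fun v => γ/4 - v))
      have b6 := Finset.card_union_le A V
      have c1 := Finset.card_image_le (s := V) (f := fun v => γ/4 - v)
      have c2 := Finset.card_image_le (s := V) (f := fun v => -v - γ/4)
      have c3 := Finset.card_image_le (s := V) (f := fun v => v - γ/4)
      have c4 := Finset.card_image_le (s := V) (f := fun v => -v - γ/2)
      have c5 := Finset.card_image_le (s := V) (f := fun v => v - γ/2)
      have cA : A.card ≤ 7 := by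
        refine le_trans (Finset.card_image_le) ?_
        simp
      rw [hUdef]
      omega
    refine ⟨U, h0U, by rw [hVdef] at hUcard; exact hUcard, ?_⟩
    intro f hf g hg
    set pt : Fin X.card → Fin din → ℝ := fun p => ((X.equivFin.symm p : X) : Fin din → ℝ)
      with hptdef
    have hptX : ∀ p, pt p ∈ X := fun p => (X.equivFin.symm p).2
    have hmemV : ∀ p k, pt p k ∈ V := fun p k =>
      Finset.mem_biUnion.2 ⟨pt p, hptX p, Finset.mem_image.2 ⟨k, Finset.mem_univ k, rfl⟩⟩
    have hinj : ∀ q p, p ≠ q → ∃ k, pt p k ≠ pt q k := by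
      intro q p hpq
      have hne : pt p ≠ pt q := by
        intro h
        exact hpq (X.equivFin.symm.injective (Subtype.ext h))
      exact Function.ne_iff.1 hne
    set fv : Fin X.card → Fin dout → ℝ := fun p => f (pt p) with hfvdef
    set gv : Fin X.card → Fin dout → Fin din → ℝ := fun p => g (pt p) with hgvdef
    have hfvV : ∀ p i, fv p i ∈ V := by
      intro p i
      rw [hXY]
      exact Finset.mem_biUnion.2 ⟨f (pt p), hf _ (hptX p),
        Finset.mem_image.2 ⟨i, Finset.mem_univ i, rfl⟩⟩
    set j0 : Fin din := ⟨0, hdin⟩ with hj0def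
    refine ⟨tM (eP3 10 din X.card) (Equiv.refl (Fin din)) W1f,
      tV (eP3 10 din X.card) (c1f pt (γ/4) (γ/2)),
      tM (eP3 2 din X.card) (eP3 10 din X.card) W1'f,
      tV (eP3 2 din X.card) (c1'f (γ/4)),
      tM (eP4 6 din dout X.card) (eP3 2 din X.card) (W1pf (4/γ)),
      tV (eP4 6 din dout X.card) (c1pf (γ/4)),
      tM (eP4 2 din dout X.card) (eP4 6 din dout X.card) (W2'f fv gv j0),
      0,
      tM (Equiv.refl (Fin dout)) (eP4 2 din dout X.card) W2pf,
      0, ?_, ?_, ?_, ?_, ?_, ?_, ?_, ?_, ?_, ?_, ?_⟩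
    · intro a b
      rw [tM_apply]
      obtain ⟨⟨u, j⟩, p⟩ := (eP3 10 din X.card).symm a
      simp only [W1f]
      split
      · fin_cases u <;> simp [w1c] <;> assumption
      · exact h0U
    · intro a
      rw [tV_apply]
      obtain ⟨⟨u, j⟩, p⟩ := (eP3 10 din X.card).symm a
      simp only [c1f]
      fin_cases u
      · exact hI1U _ (hmemV p j)
      · exact hI2U _ (hmemV p j)
      · exact hI2U _ (hmemV p j)
      · exact hI3U _ (hmemV p j)
      · exact hI4U _ (hmemV p j)
      · exact hI5U _ (hmemV p j)
      · exact h0U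
      · exact h0U
      · exact h0U
      · exact h0U
    · intro a b
      rw [tM_apply]
      obtain ⟨⟨s, j⟩, p⟩ := (eP3 2 din X.card).symm a
      obtain ⟨⟨u, j'⟩, p'⟩ := (eP3 10 din X.card).symm b
      simp only [W1'f]
      split_ifs
      · fin_cases u <;> simp [w1'a] <;> assumption
      · exact h0U
      · fin_cases u <;> simp [w1'b] <;> assumption
      · exact h0U
    · intro a
      rw [tV_apply]
      obtain ⟨⟨s, j⟩, p⟩ := (eP3 2 din X.card).symm a
      simp only [c1'f]
      split
      · exact hmδU
      · exact h0U
    · intro a b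
      rw [tM_apply]
      obtain ⟨⟨⟨u, j⟩, i⟩, p⟩ := (eP4 6 din dout X.card).symm a
      obtain ⟨⟨s, j'⟩, p'⟩ := (eP3 2 din X.card).symm b
      simp only [W1pf]
      split_ifs
      · fin_cases u <;> simp [aco] <;> assumption
      · fin_cases u <;> simp [bco] <;> assumption
      · exact h0U
    · intro a
      rw [tV_apply]
      obtain ⟨⟨⟨u, j⟩, i⟩, p⟩ := (eP4 6 din dout X.card).symm a
      simp only [c1pf]
      fin_cases u <;> simp [bia] <;> assumption
    · intro a b
      rw [tM_apply]
      obtain ⟨⟨⟨s, j⟩, i⟩, p⟩ := (eP4 2 din dout X.card).symm a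
      obtain ⟨⟨⟨u, j'⟩, i'⟩, p'⟩ := (eP4 6 din dout X.card).symm b
      simp only [W2'f]
      split_ifs
      · rcases hg (pt p) (hptX p) i j with hgc | hgc <;>
          fin_cases u <;> simp [gco, hgvdef, hgc] <;> assumption
      · fin_cases u <;> simp [fco] <;>
          first
          | exact h0U
          | exact hVU _ (hfvV p i)
      · exact h0U
      · exact h0U
    · intro a
      exact h0U
    · intro a b
      rw [tM_apply]
      obtain ⟨⟨⟨s, j⟩, i'⟩, p⟩ := (eP4 2 din dout X.card).symm b
      simp only [W2pf]
      split
      · exact h1U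
      · exact h0U
    · intro a
      exact h0U
    · intro fnet hfnet
      subst hfnet
      have hform : ∀ (x : Fin din → ℝ) (i : Fin dout),
          ((tM (Equiv.refl (Fin dout)) (eP4 2 din dout X.card) W2pf).mulVec
            ((tM (eP4 2 din dout X.card) (eP4 6 din dout X.card) (W2'f fv gv j0)).mulVec
              (relu ((tM (eP4 6 din dout X.card) (eP3 2 din X.card) (W1pf (4/γ))).mulVec
                ((tM (eP3 2 din X.card) (eP3 10 din X.card) W1'f).mulVec
                  (relu ((tM (eP3 10 din X.card) (Equiv.refl (Fin din)) W1f).mulVec x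
                    + tV (eP3 10 din X.card) (c1f pt (γ/4) (γ/2))))
                  + tV (eP3 2 din X.card) (c1'f (γ/4)))
                + tV (eP4 6 din dout X.card) (c1pf (γ/4)))) + 0) + 0) i
          = (∑ p, ∑ j, gv p i j *
              (max (tRamp pt (γ/4) x p j + γ/4 - 3 * rho pt (γ/4) (γ/2) x p) 0
                - max (γ/4 - 3 * rho pt (γ/4) (γ/2) x p) 0))
            + ∑ p, fv p i * max (1 - (4/γ) * rho pt (γ/4) (γ/2) x p) 0 := by
        intro x i
        rw [add_zero, add_zero]
        exact layer5_eq pt (γ/4) (γ/2) (4/γ) fv gv j0 x _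
          (layer4_eq pt (γ/4) (γ/2) (4/γ) fv gv j0 x _
            (layer3_eq pt (γ/4) (γ/2) (4/γ) x _
              (layer2_eq pt (γ/4) (γ/2) x))) i
      constructor
      · intro x hx
        obtain ⟨q0, hq⟩ : ∃ q, pt q = x := ⟨X.equivFin ⟨x, hx⟩, by simp [hptdef]⟩
        subst hq
        have hk := key pt fv gv hγpos V hmemV hsep q0 (hinj q0)
        have hpt := hk.self_of_nhds
        funext i
        refine (hform (pt q0) i).trans ?_
        rw [hpt i]
        simp [hfvdef]
      · intro x hx
        obtain ⟨q0, hq⟩ : ∃ q, pt q = x := ⟨X.equivFin ⟨x, hx⟩, by simp [hptdef]⟩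
        subst hq
        have hk := key pt fv gv hγpos V hmemV hsep q0 (hinj q0)
        have hEv : (fun x => (tM (Equiv.refl (Fin dout)) (eP4 2 din dout X.card) W2pf).mulVec
            ((tM (eP4 2 din dout X.card) (eP4 6 din dout X.card) (W2'f fv gv j0)).mulVec
              (relu ((tM (eP4 6 din dout X.card) (eP3 2 din X.card) (W1pf (4/γ))).mulVec
                ((tM (eP3 2 din X.card) (eP3 10 din X.card) W1'f).mulVec
                  (relu ((tM (eP3 10 din X.card) (Equiv.refl (Fin din)) W1f).mulVec x
                    + tV (eP3 10 din X.card) (c1f pt (γ/4) (γ/2))))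
                  + tV (eP3 2 din X.card) (c1'f (γ/4)))
                + tV (eP4 6 din dout X.card) (c1pf (γ/4)))) + 0) + 0)
            =ᶠ[𝓝 (pt q0)]
            (fun x => fun i => fv q0 i + ∑ j, gv q0 i j * (x j - pt q0 j)) := by
          filter_upwards [hk] with y hy
          funext i
          exact (hform y i).trans (hy i)
        have hA := affine_hasFDeriv (fv q0) (gv q0) (pt q0)
        have hF := hA.congr_of_eventuallyEq hEv
        refine ⟨hF.differentiableAt, fun i j => ?_⟩
        rw [hF.fderiv]
        rw [Lmap_single]
end

section
/- Let k ≥ 1 and d ≥ 1 be integers and let C_d be a set of classifiers on X_d. Suppose (P_{ε,δ})_{ε,δ ∈ 2^{−ℕ}} is a family of learning algorithms such that for all ε, δ ∈ 2^{−ℕ}, all integers m ≥ (d/(εδ))^k, and every probability measure D on X_d × Y consistent with C_d: Pr_{Z ∼ D^m}[ err_D(P_{ε,δ}(Z)) ≤ ε ] ≥ 1 − δ. Let B be the learning algorithm which, on a dataset Z of size m, outputs P_{r,r}(Z), where r is the largest element of 2^{−ℕ} with r ≤ m^{−1/(3k)}. Suppose that A is a learning algorithm, 𝒜 is a finite family of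 learning algorithms with B ∈ 𝒜, and k' ≥ 1 is such that for all ε, δ ∈ 2^{−ℕ}, all integers m ≥ 1, all probability measures D on X_d × Y, and all integers M ≥ (dm/(εδ))^{k'}: Pr_{Z ∼ D^m, Z' ∼ D^M}[ err_D(A(Z;Z')) ≤ min_{B' ∈ 𝒜} err_D(B'(Z)) + ε ] ≥ 1 − δ. Then for all ε, δ ∈ 2^{−ℕ}, all integers m ≥ (4d)^{3k} + (8/min(ε,δ)³)^k, all integers M ≥ (4dm/(εδ))^{k'}, and every probability measure D on X_d × Y consistent with C_d: Pr_{Z ∼ D^m, Z' ∼ D^M}[ err_D(A(Z;Z')) ≤ ε ] ≥ 1 − δ. -/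
/-!
Run on `m` samples, `B` uses `P_{r,r}` with `r ≈ m^{-1/(3k)}`; the lower bound on `m` makes
`m ≥ (d/r²)^k` and `r ≤ min(ε, δ)/2`, so except with probability `δ/2` the classifier
`B(Z)` has error at most `ε/2`. The oracle inequality for `A` at accuracy `ε/2` and confidence
`δ/2` (whose sample requirement `(dm/((ε/2)(δ/2)))^{k'}` is exactly `(4dm/(εδ))^{k'}`) puts
`A(Z;Z')` within `ε/2` of `B(Z)` except with probability `δ/2`, and a union bound combines the
two events.
-/

open MeasureTheory

/-- The two-element label set `{-1, 1}`. -/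
abbrev Sign : Type := ({-1, 1} : Set ℤ)

/-- A labeled example in dimension `d`: a point of `X_d = {-1,1}^d` with a label. -/
abbrev Example (d : ℕ) : Type := (Fin d → Sign) × Sign

/-- A binary classifier on `X_d = {-1,1}^d`. -/
abbrev Classifier (d : ℕ) : Type := (Fin d → Sign) → Sign

/-- A learning algorithm: maps finite datasets of labeled examples to classifiers. -/
abbrev Learner (d : ℕ) : Type := List (Example d) → Classifier d

/-- The error of classifier `c` with respect to distribution `D` on `X_d × Y`. -/
noncomputable def errD {d : ℕ} (D : Measure (Example d)) (c : Classifier d) : ℝ :=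
  (D {p | c p.1 ≠ p.2}).toReal

/-- `x` is of the form `2^{-i}` for some `i ∈ ℕ`. -/
def IsPow2Inv (x : ℝ) : Prop := ∃ i : ℕ, x = 2 ^ (-(i : ℤ))

namespace IsPow2Inv

lemma pos {x : ℝ} (h : IsPow2Inv x) : 0 < x := by
  obtain ⟨i, rfl⟩ := h
  positivity

lemma div_two {x : ℝ} (h : IsPow2Inv x) : IsPow2Inv (x / 2) := by
  obtain ⟨i, rfl⟩ := h
  refine ⟨i + 1, ?_⟩
  rw [Nat.cast_succ, neg_add, zpow_add₀ two_ne_zero, zpow_neg_one, div_eq_mul_inv]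

lemma of_zpow_of_nonpos {n : ℤ} (hn : n ≤ 0) : IsPow2Inv ((2 : ℝ) ^ n) :=
  ⟨(-n).toNat, by rw [Int.toNat_of_nonneg (by omega), neg_neg]⟩

lemma lt_two_mul_of_isGreatest {x r : ℝ} (hx0 : 0 < x) (hx1 : x ≤ 1)
    (hr : IsGreatest {q | IsPow2Inv q ∧ q ≤ x} r) : x < 2 * r := by
  obtain ⟨n, hn_le, hn_lt⟩ := exists_mem_Ico_zpow hx0 (one_lt_two : (1 : ℝ) < 2)
  have hn : n ≤ 0 := (zpow_le_one_iff_right₀ one_lt_two).1 (hn_le.trans hx1)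
  have hq : (2 : ℝ) ^ n ≤ r := hr.2 ⟨of_zpow_of_nonpos hn, hn_le⟩
  rw [zpow_add_one₀ two_ne_zero] at hn_lt
  linarith

end IsPow2Inv

lemma sample_size_bounds {k d m : ℕ} (hk : k ≠ 0) {e r : ℝ} (he : 0 < e)
    (hm : ((4 * d : ℕ) : ℝ) ^ (3 * k) + (8 / e ^ 3) ^ k ≤ m)
    (hr_le : r ≤ (m : ℝ) ^ (-(1 / (3 * (k : ℝ)))))
    (hr_lt : (m : ℝ) ^ (-(1 / (3 * (k : ℝ)))) < 2 * r) :
    ((d : ℝ) / (r * r)) ^ k ≤ m ∧ r ≤ e / 2 := by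
  -- With `t = m^{1/(3k)}` we have `r ∈ (1/(2t), 1/t]`, and the two summands bounding `m = t^{3k}`
  -- give `4d ≤ t` and `2/e ≤ t`.
  set t : ℝ := (m : ℝ) ^ ((3 * k : ℕ) : ℝ)⁻¹
  have ht : t ^ (3 * k) = m := Real.rpow_inv_natCast_pow m.cast_nonneg (by omega)
  have ht0 : 0 ≤ t := by positivity
  have hx : (m : ℝ) ^ (-(1 / (3 * (k : ℝ)))) = t⁻¹ := by
    rw [Real.rpow_neg m.cast_nonneg, one_div]
    simp only [t, Nat.cast_mul, Nat.cast_ofNat]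
  rw [hx] at hr_le hr_lt
  have h8 : (8 / e ^ 3) ^ k = (2 / e) ^ (3 * k) := by rw [pow_mul]; ring
  have hd_le : 4 * (d : ℝ) ≤ t := by
    refine (pow_le_pow_iff_left₀ (n := 3 * k) (by positivity) ht0 (by omega)).1 ?_
    have : (0 : ℝ) ≤ (8 / e ^ 3) ^ k := by positivity
    push_cast at hm
    linarith
  have he_le : 2 / e ≤ t := by
    refine (pow_le_pow_iff_left₀ (n := 3 * k) (by positivity) ht0 (by omega)).1 ?_
    have : (0 : ℝ) ≤ ((4 * d : ℕ) : ℝ) ^ (3 * k) := by positivity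
    linarith
  have ht_pos : 0 < t := lt_of_lt_of_le (by positivity) he_le
  have hrt : 1 < 2 * (r * t) := by
    have := mul_lt_mul_of_pos_right hr_lt ht_pos
    rwa [inv_mul_cancel₀ ht_pos.ne', mul_assoc] at this
  have hr_pos : 0 < r := by nlinarith
  constructor
  · have hdr : (d : ℝ) / (r * r) ≤ t ^ 3 := by
      have hrt2 : t ≤ t * (4 * (r * t) ^ 2) := le_mul_of_one_le_right ht0 (by nlinarith)
      rw [div_le_iff₀ (by positivity)]
      nlinarith
    calc ((d : ℝ) / (r * r)) ^ k ≤ (t ^ 3) ^ k := pow_le_pow_left₀ (by positivity) hdr k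
      _ = m := by rw [← pow_mul, ht]
  · calc r ≤ t⁻¹ := hr_le
      _ ≤ (2 / e)⁻¹ := inv_anti₀ (by positivity) he_le
      _ = e / 2 := inv_div 2 e

lemma MeasureTheory.ofReal_one_sub_add_le_measure {α : Type*} [MeasurableSpace α]
    {μ : Measure α} [IsProbabilityMeasure μ] {S T U : Set α}
    (hS : MeasurableSet S) (hT : MeasurableSet T) (hSTU : S ∩ T ⊆ U) {a b : ℝ}
    (ha : 0 ≤ a) (hb : 0 ≤ b) (hSa : ENNReal.ofReal (1 - a) ≤ μ S)
    (hTb : ENNReal.ofReal (1 - b) ≤ μ T) :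
    ENNReal.ofReal (1 - (a + b)) ≤ μ U := by
  rw [ENNReal.ofReal_sub _ ha, ENNReal.ofReal_one] at hSa
  rw [ENNReal.ofReal_sub _ hb, ENNReal.ofReal_one] at hTb
  have hSc : μ Sᶜ ≤ ENNReal.ofReal a := by
    rw [prob_compl_eq_one_sub hS]; exact tsub_le_iff_tsub_le.1 hSa
  have hTc : μ Tᶜ ≤ ENNReal.ofReal b := by
    rw [prob_compl_eq_one_sub hT]; exact tsub_le_iff_tsub_le.1 hTb
  have hUc : μ Uᶜ ≤ ENNReal.ofReal (a + b) :=
    calc μ Uᶜ ≤ μ (Sᶜ ∪ Tᶜ) := by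
          rw [← Set.compl_inter]; exact measure_mono (Set.compl_subset_compl.2 hSTU)
      _ ≤ μ Sᶜ + μ Tᶜ := measure_union_le _ _
      _ ≤ ENNReal.ofReal (a + b) := by rw [ENNReal.ofReal_add ha hb]; exact add_le_add hSc hTc
  rw [ENNReal.ofReal_sub _ (by positivity), ENNReal.ofReal_one, tsub_le_iff_right]
  calc (1 : ENNReal) = μ (U ∪ Uᶜ) := by rw [Set.union_compl_self, measure_univ]
    _ ≤ μ U + μ Uᶜ := measure_union_le _ _
    _ ≤ μ U + ENNReal.ofReal (a + b) := by gcongr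

theorem statement10_general (k : ℕ) (hk : 1 ≤ k) (d : ℕ)
    (Cd : Set (Classifier d))
    (P : ℝ → ℝ → Learner d)
    (hP : ∀ ε δ : ℝ, IsPow2Inv ε → IsPow2Inv δ →
      ∀ m : ℕ, ((d : ℝ) / (ε * δ)) ^ k ≤ (m : ℝ) →
      ∀ (D : Measure (Example d)) [IsProbabilityMeasure D],
        (∃ c ∈ Cd, errD D c = 0) →
        ENNReal.ofReal (1 - δ) ≤
          (Measure.pi fun _ : Fin m => D)
            {Z | errD D (P ε δ (List.ofFn Z)) ≤ ε})
    (r : ℕ → ℝ)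
    (hr : ∀ m : ℕ, 1 ≤ m →
      IsGreatest {q : ℝ | IsPow2Inv q ∧ q ≤ (m : ℝ) ^ (-(1 / (3 * (k : ℝ))))} (r m))
    (B : Learner d)
    (hB : ∀ Z : List (Example d), B Z = P (r Z.length) (r Z.length) Z)
    (𝒜 : Finset (Learner d)) (hB𝒜 : B ∈ 𝒜)
    (A : Learner d) (k' : ℕ)
    (hA : ∀ ε δ : ℝ, IsPow2Inv ε → IsPow2Inv δ →
      ∀ m : ℕ, 1 ≤ m →
      ∀ (D : Measure (Example d)) [IsProbabilityMeasure D],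
      ∀ M : ℕ, (((d * m : ℕ) : ℝ) / (ε * δ)) ^ k' ≤ (M : ℝ) →
        ENNReal.ofReal (1 - δ) ≤
          ((Measure.pi fun _ : Fin m => D).prod (Measure.pi fun _ : Fin M => D))
            {p | errD D (A (List.ofFn p.1 ++ List.ofFn p.2)) ≤
              𝒜.inf' ⟨B, hB𝒜⟩ (fun B' => errD D (B' (List.ofFn p.1))) + ε}) :
    ∀ ε δ : ℝ, IsPow2Inv ε → IsPow2Inv δ →
    ∀ m : ℕ, ((4 * d : ℕ) : ℝ) ^ (3 * k) + (8 / (min ε δ) ^ 3) ^ k ≤ (m : ℝ) →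
    ∀ M : ℕ, (((4 * d * m : ℕ) : ℝ) / (ε * δ)) ^ k' ≤ (M : ℝ) →
    ∀ (D : Measure (Example d)) [IsProbabilityMeasure D],
      (∃ c ∈ Cd, errD D c = 0) →
      ENNReal.ofReal (1 - δ) ≤
        ((Measure.pi fun _ : Fin m => D).prod (Measure.pi fun _ : Fin M => D))
          {p | errD D (A (List.ofFn p.1 ++ List.ofFn p.2)) ≤ ε} := by
  intro ε δ hε hδ m hm M hM D _ hcons
  have hmin : 0 < min ε δ := lt_min hε.pos hδ.pos
  have hm_pos : 0 < (m : ℝ) := lt_of_lt_of_le (by positivity) hm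
  have hm1 : 1 ≤ m := Nat.one_le_iff_ne_zero.2 (by exact_mod_cast hm_pos.ne')
  obtain ⟨hr_pow, hr_le⟩ := (hr m hm1).1
  have hr_lt := IsPow2Inv.lt_two_mul_of_isGreatest (Real.rpow_pos_of_pos hm_pos _)
    (Real.rpow_le_one_of_one_le_of_nonpos (Nat.one_le_cast.2 hm1) (by simp))
    (hr m hm1)
  obtain ⟨hPm, hr_min⟩ := sample_size_bounds (by omega) hmin hm hr_le hr_lt
  have hA_good := hA (ε / 2) (δ / 2) hε.div_two hδ.div_two m hm1 D M (by
    convert hM using 2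
    push_cast
    field_simp
    ring)
  have hB_good : ENNReal.ofReal (1 - r m) ≤
      ((Measure.pi fun _ : Fin m => D).prod (Measure.pi fun _ : Fin M => D))
        (Prod.fst ⁻¹' {Z | errD D (P (r m) (r m) (List.ofFn Z)) ≤ r m}) := by
    rw [← Set.prod_univ, Measure.prod_prod, measure_univ, mul_one]
    exact hP (r m) (r m) hr_pow hr_pow m hPm D hcons
  refine le_trans (ENNReal.ofReal_le_ofReal ?_) (ofReal_one_sub_add_le_measure
    (Set.to_countable _).measurableSet (Set.to_countable _).measurableSet ?_
    (by linarith [hδ.pos]) hr_pow.pos.le hA_good hB_good)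
  · linarith [min_le_right ε δ]
  rintro p ⟨hA_p, hB_p⟩
  have hB_le : 𝒜.inf' ⟨B, hB𝒜⟩ (fun B' => errD D (B' (List.ofFn p.1))) ≤
      errD D (P (r m) (r m) (List.ofFn p.1)) := by
    simpa only [hB, List.length_ofFn] using
      Finset.inf'_le (fun B' => errD D (B' (List.ofFn p.1))) hB𝒜
  simp only [Set.mem_ofPred_eq, Set.mem_preimage] at hA_p hB_p ⊢
  linarith [min_le_left ε δ]

/-- Claim 2 of the paper: a Turing-optimal learner PAC-learns any
PAC-learnable class: if `P_{ε,δ}` PAC-learns `C_d` with sample requirement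
`m ≥ (d/(εδ))^k`, `B` is the learner running `P_{r,r}` for `r` the largest power of two
`≤ m^{-1/(3k)}`, and `A` is a PAO learner for a finite family `𝒜 ∋ B` with sample
requirement `M ≥ (dm/(εδ))^{k'}`, then `A` PAC-learns `C_d`: for `ε, δ ∈ 2^{-ℕ}`,
`m ≥ (4d)^{3k} + (8/min(ε,δ)³)^k`, `M ≥ (4dm/(εδ))^{k'}`, and any distribution `D`
consistent with `C_d`, `A` outputs a classifier of error at most `ε` with probability at
least `1 - δ`. -/
theorem statement10 (k : ℕ) (hk : 1 ≤ k) (d : ℕ) (hd : 1 ≤ d)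
    (Cd : Set (Classifier d))
    (P : ℝ → ℝ → Learner d)
    (hP : ∀ ε δ : ℝ, IsPow2Inv ε → IsPow2Inv δ →
      ∀ m : ℕ, ((d : ℝ) / (ε * δ)) ^ k ≤ (m : ℝ) →
      ∀ (D : Measure (Example d)) [IsProbabilityMeasure D],
        (∃ c ∈ Cd, errD D c = 0) →
        ENNReal.ofReal (1 - δ) ≤
          (Measure.pi fun _ : Fin m => D)
            {Z | errD D (P ε δ (List.ofFn Z)) ≤ ε})
    (r : ℕ → ℝ)
    (hr : ∀ m : ℕ, 1 ≤ m →
      IsGreatest {q : ℝ | IsPow2Inv q ∧ q ≤ (m : ℝ) ^ (-(1 / (3 * (k : ℝ))))} (r m))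
    (B : Learner d)
    (hB : ∀ Z : List (Example d), B Z = P (r Z.length) (r Z.length) Z)
    (𝒜 : Finset (Learner d)) (hB𝒜 : B ∈ 𝒜)
    (A : Learner d) (k' : ℕ) (hk' : 1 ≤ k')
    (hA : ∀ ε δ : ℝ, IsPow2Inv ε → IsPow2Inv δ →
      ∀ m : ℕ, 1 ≤ m →
      ∀ (D : Measure (Example d)) [IsProbabilityMeasure D],
      ∀ M : ℕ, (((d * m : ℕ) : ℝ) / (ε * δ)) ^ k' ≤ (M : ℝ) →
        ENNReal.ofReal (1 - δ) ≤
          ((Measure.pi fun _ : Fin m => D).prod (Measure.pi fun _ : Fin M => D))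
            {p | errD D (A (List.ofFn p.1 ++ List.ofFn p.2)) ≤
              𝒜.inf' ⟨B, hB𝒜⟩ (fun B' => errD D (B' (List.ofFn p.1))) + ε}) :
    ∀ ε δ : ℝ, IsPow2Inv ε → IsPow2Inv δ →
    ∀ m : ℕ, ((4 * d : ℕ) : ℝ) ^ (3 * k) + (8 / (min ε δ) ^ 3) ^ k ≤ (m : ℝ) →
    ∀ M : ℕ, (((4 * d * m : ℕ) : ℝ) / (ε * δ)) ^ k' ≤ (M : ℝ) →
    ∀ (D : Measure (Example d)) [IsProbabilityMeasure D],
      (∃ c ∈ Cd, errD D c = 0) →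
      ENNReal.ofReal (1 - δ) ≤
        ((Measure.pi fun _ : Fin m => D).prod (Measure.pi fun _ : Fin M => D))
          {p | errD D (A (List.ofFn p.1 ++ List.ofFn p.2)) ≤ ε} :=
  statement10_general k hk d Cd P hP r hr B hB 𝒜 hB𝒜 A k' hA
end
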